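/- arXiv:2212.05455 — 9 statements merged into one kernel-verified Lean document; each statement's English description precedes it below -/
import Mathlib

section
/- Let k ≥ 2 be an integer and let H be a connected graph of order n ≥ 6k + 5 that is (n−1)-closed, i.e., every pair of nonadjacent vertices u, v of H satisfies d(u) + d(v) ≤ n − 2. If the number of edges satisfies e(H) ≥ C(n−k−1, 2) + k² + k + 1, then the clique number of H satisfies ω(H) ≥ n − k. -/
open Finset
open scoped Classical

/-- The adjacency matrix of a simple graph over ℝ. -/
noncomputable def adjMat {V : Type*} [Fintype V] (G : SimpleGraph V) :
    Matrix V V ℝ := fun i j => if G.Adj i j then 1 else 0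

/-- The spectral radius of a graph: the largest (real) eigenvalue of its
adjacency matrix. -/
noncomputable def specRad {V : Type*} [Fintype V] (G : SimpleGraph V) : ℝ :=
  sSup {μ : ℝ | Module.End.HasEigenvalue (Matrix.mulVecLin (adjMat G)) μ}

/-- The signless Laplacian matrix `Q = D + A` of a simple graph. -/
noncomputable def qMat {V : Type*} [Fintype V] (G : SimpleGraph V) :
    Matrix V V ℝ := fun i j =>
  (if i = j then ((univ.filter fun u => G.Adj i u).card : ℝ) else 0) +
    (if G.Adj i j then 1 else 0)

/-- The signless Laplacian spectral radius of a graph: the largest (real)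
eigenvalue of `Q = D + A`. -/
noncomputable def qRad {V : Type*} [Fintype V] (G : SimpleGraph V) : ℝ :=
  sSup {μ : ℝ | Module.End.HasEigenvalue (Matrix.mulVecLin (qMat G)) μ}

/-- `G` has a spanning `k`-ended-tree: a spanning tree with at most `k`
leaves (vertices of degree 1 in the tree). -/
noncomputable def HasSpanningKEndedTree {V : Type*} [Fintype V]
    (G : SimpleGraph V) (k : ℕ) : Prop :=
  ∃ T : SimpleGraph V, T ≤ G ∧ T.IsTree ∧
    (univ.filter fun v => T.degree v = 1).card ≤ k

/-- `G` has a spanning tree with leaf degree at most `k`: every vertex of the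
tree is adjacent (in the tree) to at most `k` leaves of the tree. -/
noncomputable def HasSpanningTreeLeafDegLE {V : Type*} [Fintype V]
    (G : SimpleGraph V) (k : ℕ) : Prop :=
  ∃ T : SimpleGraph V, T ≤ G ∧ T.IsTree ∧
    ∀ v, (univ.filter fun u => T.Adj v u ∧ T.degree u = 1).card ≤ k

/-- The graph `K₁ ∨ (K_{n-k-1} + kK₁)` on `n` vertices: vertex `0` is joined to
everything, vertices `0, …, n-k-1` form a clique `K_{n-k}`, and the last `k`
vertices are only adjacent to vertex `0`. -/
def oneJoinCliquePlusIso (n k : ℕ) : SimpleGraph (Fin n) :=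
  SimpleGraph.fromRel fun i j => i.val = 0 ∨ (i.val < n - k ∧ j.val < n - k)

private lemma closedAuxI (N K rr ss e dr ds qq : ℤ) (hK : 2 ≤ K)
    (hN : 6 * K + 5 ≤ N) (hr : K + 1 ≤ rr) (hrs : rr + ss = N)
    (hhalf : 2 * rr ≤ N)
    (z1 : ds + dr = 2 * e) (z2 : ds + ss ≤ ss * ss + qq) (z3 : qq ≤ dr)
    (hDR : dr + rr ≤ rr * rr)
    (he2 : (N - K - 1) * (N - K - 2) + 2 * K ^ 2 + 2 * K + 2 ≤ 2 * e) :
    False := by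
  have hss : ss = N - rr := by linarith
  subst hss
  nlinarith [mul_nonneg (by linarith : (0:ℤ) ≤ rr - (K + 1))
    (by linarith : (0:ℤ) ≤ 2 * N - 2 - 3 * rr - 3 * K)]

private lemma closedAuxI' (N K rr ss e dr ds qq : ℤ) (hK : 2 ≤ K)
    (hN : 6 * K + 5 ≤ N) (hr : K + 1 ≤ rr) (hrs : rr + ss = N)
    (hNval : N = 2 * rr - 1)
    (z1 : ds + dr = 2 * e) (z2 : ds + ss ≤ ss * ss + qq) (z3 : qq ≤ dr)
    (hDR : dr + 2 * rr ≤ rr * rr)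
    (he2 : (N - K - 1) * (N - K - 2) + 2 * K ^ 2 + 2 * K + 2 ≤ 2 * e) :
    False := by
  subst hNval
  have hss : ss = rr - 1 := by linarith
  subst hss
  nlinarith [mul_nonneg (by linarith : (0:ℤ) ≤ rr - (3 * K + 3))
    (by linarith : (0:ℤ) ≤ rr - K)]

private lemma closedAuxII (N K rr ss e dr ds qq : ℤ) (hK : 2 ≤ K)
    (hN : 6 * K + 5 ≤ N) (hr : K + 1 ≤ rr) (hrs : rr + ss = N)
    (hcase : N + 2 ≤ 2 * rr)
    (z1 : ds + dr = 2 * e) (z2 : ds + ss ≤ ss * ss + qq) (z4 : qq ≤ ss * rr)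
    (z5 : 2 * dr + 2 * rr ≤ N * rr)
    (he2 : (N - K - 1) * (N - K - 2) + 2 * K ^ 2 + 2 * K + 2 ≤ 2 * e) :
    False := by
  have hss : ss = N - rr := by linarith
  subst hss
  nlinarith [mul_nonneg (by linarith : (0:ℤ) ≤ N - (6 * K + 5))
      (by linarith : (0:ℤ) ≤ N - (2 * K + 1)),
    mul_nonneg (by linarith : (0:ℤ) ≤ 2 * rr - N - 2)
      (by linarith : (0:ℤ) ≤ N)]

/-- **Lemma (large `(n-1)`-closed graphs contain a large clique).**
Let `k ≥ 2` and let `H` be a connected `(n-1)`-closed graph of order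
`n ≥ 6k + 5` (i.e. every pair of distinct nonadjacent vertices has degree sum
at most `n - 2`).  If `e(H) ≥ C(n-k-1, 2) + k² + k + 1`, then `ω(H) ≥ n - k`. -/
theorem closed_graph_large_clique {n k : ℕ} (hk : 2 ≤ k) (hn : 6 * k + 5 ≤ n)
    (H : SimpleGraph (Fin n)) (hH : H.Connected)
    (hclosed : ∀ u v : Fin n, u ≠ v → ¬ H.Adj u v →
      (H.degree u : ℤ) + (H.degree v : ℤ) ≤ (n : ℤ) - 2)
    (he : Nat.choose (n - k - 1) 2 + k ^ 2 + k + 1 ≤ H.edgeFinset.card) :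
    n - k ≤ H.cliqueNum := by
  classical
  set R : Finset (Fin n) := univ.filter (fun v => 2 * H.degree v + 2 ≤ n) with hRdef
  set S : Finset (Fin n) := univ \ R with hSdef
  have hRle : R.card ≤ n := by
    simpa using Finset.card_le_univ R
  have hrs : R.card + S.card = n := by
    rw [hSdef, Finset.card_sdiff_of_subset (Finset.subset_univ R)]
    simp only [Finset.card_univ, Fintype.card_fin]
    omega
  have hmemR : ∀ v : Fin n, v ∈ R → 2 * H.degree v + 2 ≤ n := by
    intro v hv
    rw [hRdef, Finset.mem_filter] at hv
    exact hv.2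
  have hmemS : ∀ w : Fin n, w ∈ S → n + 1 ≤ 2 * H.degree w + 2 := by
    intro w hw
    rw [hSdef, Finset.mem_sdiff, hRdef, Finset.mem_filter] at hw
    have h1 : ¬ (2 * H.degree w + 2 ≤ n) := fun hc => hw.2 ⟨Finset.mem_univ w, hc⟩
    omega
  -- S is a clique
  have hclq : ∀ u ∈ S, ∀ w ∈ S, u ≠ w → H.Adj u w := by
    intro u hu w hw huw
    by_contra hadj
    have h1 := hclosed u w huw hadj
    have h2' : (n : ℤ) + 1 ≤ 2 * (H.degree u : ℤ) + 2 := by exact_mod_cast hmemS u hu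
    have h3' : (n : ℤ) + 1 ≤ 2 * (H.degree w : ℤ) + 2 := by exact_mod_cast hmemS w hw
    linarith
  have hclique : H.IsClique (S : Set (Fin n)) := by
    intro u hu w hw huw
    exact hclq u (Finset.mem_coe.mp hu) w (Finset.mem_coe.mp hw) huw
  by_cases hr : R.card ≤ k
  · have h2 : S.card ≤ H.cliqueNum :=
      SimpleGraph.IsClique.card_le_cliqueNum (tc := hclique)
    omega
  · exfalso
    push_neg at hr
    -- counting setup
    have hsum : (∑ w ∈ S, H.degree w) + (∑ v ∈ R, H.degree v)
        = 2 * H.edgeFinset.card := by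
      rw [hSdef, Finset.sum_sdiff (Finset.subset_univ R)]
      exact H.sum_degrees_eq_twice_card_edges
    -- per-vertex bound for S members
    have hDSle : (∑ w ∈ S, H.degree w) + S.card
        ≤ S.card * S.card + ∑ w ∈ S, (R.filter (fun v => H.Adj w v)).card := by
      have hper : ∀ w ∈ S, H.degree w + 1
          ≤ S.card + (R.filter (fun v => H.Adj w v)).card := by
        intro w hw
        have hsplit : (H.neighborFinset w \ R).card + (H.neighborFinset w ∩ R).card
            = H.degree w := by
          rw [Finset.card_sdiff_add_card_inter]
          exact H.card_neighborFinset_eq_degree w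
        have hsub : H.neighborFinset w \ R ⊆ S.erase w := by
          intro x hx
          rw [Finset.mem_sdiff] at hx
          rw [Finset.mem_erase]
          constructor
          · intro hxw
            subst hxw
            exact H.irrefl ((H.mem_neighborFinset x x).mp hx.1)
          · rw [hSdef, Finset.mem_sdiff]
            exact ⟨Finset.mem_univ x, hx.2⟩
        have h1 : (H.neighborFinset w \ R).card ≤ (S.erase w).card :=
          Finset.card_le_card hsub
        have h2 : (S.erase w).card + 1 = S.card := Finset.card_erase_add_one hw
        have h3 : (H.neighborFinset w ∩ R).card
            = (R.filter (fun v => H.Adj w v)).card := by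
          congr 1
          ext v
          simp only [Finset.mem_inter, Finset.mem_filter,
            SimpleGraph.mem_neighborFinset]
          tauto
        omega
      calc (∑ w ∈ S, H.degree w) + S.card = ∑ w ∈ S, (H.degree w + 1) := by
            rw [Finset.sum_add_distrib, Finset.sum_const, smul_eq_mul, mul_one]
        _ ≤ ∑ w ∈ S, (S.card + (R.filter (fun v => H.Adj w v)).card) :=
            Finset.sum_le_sum hper
        _ = S.card * S.card + ∑ w ∈ S, (R.filter (fun v => H.Adj w v)).card := by
            rw [Finset.sum_add_distrib, Finset.sum_const, smul_eq_mul]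
    -- q swap and bounds
    have hqswap : (∑ w ∈ S, (R.filter (fun v => H.Adj w v)).card)
        = ∑ v ∈ R, (S.filter (fun w => H.Adj v w)).card := by
      simp only [Finset.card_filter]
      rw [Finset.sum_comm]
      refine Finset.sum_congr rfl fun v _ => Finset.sum_congr rfl fun w _ => ?_
      exact if_congr (H.adj_comm w v) rfl rfl
    have hqDR : (∑ w ∈ S, (R.filter (fun v => H.Adj w v)).card)
        ≤ ∑ v ∈ R, H.degree v := by
      rw [hqswap]
      refine Finset.sum_le_sum fun v _ => ?_
      have hsub : S.filter (fun w => H.Adj v w) ⊆ H.neighborFinset v := by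
        intro w hw
        rw [Finset.mem_filter] at hw
        exact (H.mem_neighborFinset v w).mpr hw.2
      have h1 := Finset.card_le_card hsub
      rwa [H.card_neighborFinset_eq_degree v] at h1
    have hqsr : (∑ w ∈ S, (R.filter (fun v => H.Adj w v)).card)
        ≤ S.card * R.card := by
      calc (∑ w ∈ S, (R.filter (fun v => H.Adj w v)).card)
          ≤ ∑ _w ∈ S, R.card :=
            Finset.sum_le_sum fun w _ => Finset.card_le_card (Finset.filter_subset _ _)
        _ = S.card * R.card := by rw [Finset.sum_const, smul_eq_mul]
    have hDRn : 2 * (∑ v ∈ R, H.degree v) + 2 * R.card ≤ n * R.card := by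
      calc 2 * (∑ v ∈ R, H.degree v) + 2 * R.card
          = ∑ v ∈ R, (2 * H.degree v + 2) := by
            rw [Finset.sum_add_distrib, ← Finset.mul_sum, Finset.sum_const, smul_eq_mul]
            omega
        _ ≤ ∑ _v ∈ R, n := Finset.sum_le_sum hmemR
        _ = n * R.card := by rw [Finset.sum_const, smul_eq_mul, mul_comm]
    -- cast edge bound
    have hch : 2 * Nat.choose (n - k - 1) 2 = (n - k - 1) * ((n - k - 1) - 1) := by
      rw [Nat.choose_two_right, Nat.mul_div_cancel' (Nat.even_mul_pred_self _).two_dvd]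
    have he2 : ((n : ℤ) - k - 1) * ((n : ℤ) - k - 2) + 2 * (k : ℤ) ^ 2 + 2 * k + 2
        ≤ 2 * (H.edgeFinset.card : ℤ) := by
      have h1 : 2 * (Nat.choose (n - k - 1) 2 + k ^ 2 + k + 1)
          ≤ 2 * H.edgeFinset.card := by omega
      rw [Nat.mul_add, Nat.mul_add, Nat.mul_add, hch] at h1
      have h2 : (((n - k - 1) * ((n - k - 1) - 1) + 2 * k ^ 2 + 2 * k + 2 : ℕ) : ℤ)
          ≤ 2 * (H.edgeFinset.card : ℤ) := by exact_mod_cast h1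
      have hc1 : ((n - k - 1 : ℕ) : ℤ) = (n : ℤ) - k - 1 := by omega
      have hc2 : (((n - k - 1) - 1 : ℕ) : ℤ) = (n : ℤ) - k - 2 := by omega
      push_cast at h2
      rw [hc1, hc2] at h2
      linarith
    have hK' : (2 : ℤ) ≤ (k : ℤ) := by exact_mod_cast hk
    have hN' : 6 * (k : ℤ) + 5 ≤ (n : ℤ) := by exact_mod_cast hn
    have hr' : (k : ℤ) + 1 ≤ (R.card : ℤ) := by exact_mod_cast hr
    have hrs' : (R.card : ℤ) + (S.card : ℤ) = (n : ℤ) := by exact_mod_cast hrs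
    have z1 : ((∑ w ∈ S, H.degree w : ℕ) : ℤ) + ((∑ v ∈ R, H.degree v : ℕ) : ℤ)
        = 2 * (H.edgeFinset.card : ℤ) := by exact_mod_cast hsum
    have z2 : ((∑ w ∈ S, H.degree w : ℕ) : ℤ) + (S.card : ℤ)
        ≤ (S.card : ℤ) * (S.card : ℤ)
          + ((∑ w ∈ S, (R.filter (fun v => H.Adj w v)).card : ℕ) : ℤ) := by
      exact_mod_cast hDSle
    have z3 : ((∑ w ∈ S, (R.filter (fun v => H.Adj w v)).card : ℕ) : ℤ)
        ≤ ((∑ v ∈ R, H.degree v : ℕ) : ℤ) := by exact_mod_cast hqDR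
    -- three cases on R.card versus n
    rcases lt_trichotomy (2 * R.card) (n + 1) with hcase | hcase | hcase
    · -- Case I : 2 * R.card ≤ n
      have hcase' : 2 * R.card ≤ n := by omega
      have hdegN : ∀ v ∈ R, H.degree v + 1 ≤ R.card := by
        intro v hv
        have hdv := hmemR v hv
        have hlt : H.degree v < S.card := by omega
        have hpos : 0 < (S \ H.neighborFinset v).card := by
          have h1 := Finset.le_card_sdiff (H.neighborFinset v) S
          rw [H.card_neighborFinset_eq_degree v] at h1
          omega
        obtain ⟨w, hw⟩ := Finset.card_pos.mp hpos
        rw [Finset.mem_sdiff] at hw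
        have hwS := hw.1
        have hnadj : ¬ H.Adj v w := fun h => hw.2 ((H.mem_neighborFinset v w).mpr h)
        have hvw : v ≠ w := by
          intro h
          subst h
          rw [hSdef, Finset.mem_sdiff] at hwS
          exact hwS.2 hv
        have hcl := hclosed v w hvw hnadj
        have hsub : S.erase w ⊆ H.neighborFinset w := by
          intro u hu
          rw [Finset.mem_erase] at hu
          exact (H.mem_neighborFinset w u).mpr (hclq w hwS u hu.2 (Ne.symm hu.1))
        have hdw : S.card ≤ H.degree w + 1 := by
          have h1 := Finset.card_le_card hsub
          rw [H.card_neighborFinset_eq_degree w] at h1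
          have h2 := Finset.card_erase_add_one hwS
          omega
        have hdw' : ((S.card : ℕ) : ℤ) ≤ (H.degree w : ℤ) + 1 := by exact_mod_cast hdw
        have hfin : (H.degree v : ℤ) + 1 ≤ ((R.card : ℕ) : ℤ) := by linarith
        exact_mod_cast hfin
      have hDRr : (∑ v ∈ R, H.degree v) + R.card ≤ R.card * R.card := by
        calc (∑ v ∈ R, H.degree v) + R.card = ∑ v ∈ R, (H.degree v + 1) := by
              rw [Finset.sum_add_distrib, Finset.sum_const, smul_eq_mul, mul_one]
          _ ≤ ∑ _v ∈ R, R.card := Finset.sum_le_sum hdegN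
          _ = R.card * R.card := by rw [Finset.sum_const, smul_eq_mul]
      exact closedAuxI (n : ℤ) (k : ℤ) (R.card : ℤ) (S.card : ℤ)
        (H.edgeFinset.card : ℤ) ((∑ v ∈ R, H.degree v : ℕ) : ℤ)
        ((∑ w ∈ S, H.degree w : ℕ) : ℤ)
        ((∑ w ∈ S, (R.filter (fun v => H.Adj w v)).card : ℕ) : ℤ)
        hK' hN' hr' hrs' (by exact_mod_cast hcase') z1 z2 z3
        (by exact_mod_cast hDRr) he2
    · -- Case I' : 2 * R.card = n + 1
      have hdegN : ∀ v ∈ R, H.degree v + 2 ≤ R.card := by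
        intro v hv
        have hdv := hmemR v hv
        omega
      have hDRr : (∑ v ∈ R, H.degree v) + 2 * R.card ≤ R.card * R.card := by
        calc (∑ v ∈ R, H.degree v) + 2 * R.card = ∑ v ∈ R, (H.degree v + 2) := by
              rw [Finset.sum_add_distrib, Finset.sum_const, smul_eq_mul]
              omega
          _ ≤ ∑ _v ∈ R, R.card := Finset.sum_le_sum hdegN
          _ = R.card * R.card := by rw [Finset.sum_const, smul_eq_mul]
      exact closedAuxI' (n : ℤ) (k : ℤ) (R.card : ℤ) (S.card : ℤ)
        (H.edgeFinset.card : ℤ) ((∑ v ∈ R, H.degree v : ℕ) : ℤ)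
        ((∑ w ∈ S, H.degree w : ℕ) : ℤ)
        ((∑ w ∈ S, (R.filter (fun v => H.Adj w v)).card : ℕ) : ℤ)
        hK' hN' hr' hrs' (by omega) z1 z2 z3
        (by exact_mod_cast hDRr) he2
    · -- Case II : 2 * R.card ≥ n + 2
      exact closedAuxII (n : ℤ) (k : ℤ) (R.card : ℤ) (S.card : ℤ)
        (H.edgeFinset.card : ℤ) ((∑ v ∈ R, H.degree v : ℕ) : ℤ)
        ((∑ w ∈ S, H.degree w : ℕ) : ℤ)
        ((∑ w ∈ S, (R.filter (fun v => H.Adj w v)).card : ℕ) : ℤ)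
        hK' hN' hr' hrs' (by omega) z1 z2
        (by exact_mod_cast hqsr) (by exact_mod_cast hDRn) he2
end

section
/- Let k ≥ 2 and n ≥ k + 2 be integers. The graph K₁ ∨ (K_{n−k−1} + kK₁) has no spanning k-ended-tree; that is, every spanning tree of K₁ ∨ (K_{n−k−1} + kK₁) has at least k + 1 leaves. -/
open Finset
open scoped Classical

/-- **Lemma.**  For `k ≥ 2` and `n ≥ k + 2`, the graph `K₁ ∨ (K_{n-k-1} + kK₁)`
has no spanning `k`-ended-tree: every spanning tree of it has at least `k + 1`
leaves. -/
theorem extremal_graph_no_spanning_k_ended_tree {n k : ℕ} (hk : 2 ≤ k)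
    (hn : k + 2 ≤ n) (T : SimpleGraph (Fin n))
    (hle : T ≤ oneJoinCliquePlusIso n k) (hT : T.IsTree) :
    k + 1 ≤ (univ.filter fun v => T.degree v = 1).card := by
  have hn0 : 0 < n := by omega
  haveI : NeZero n := ⟨by omega⟩
  have hconn : T.Connected := hT.isConnected
  -- adjacency facts
  have hadj : ∀ {a b : Fin n}, T.Adj a b → a.val ≠ 0 → b.val ≠ 0 →
      a.val < n - k ∧ b.val < n - k := by
    intro a b hab ha hb
    have := hle hab
    rw [oneJoinCliquePlusIso, SimpleGraph.fromRel_adj] at this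
    rcases this with ⟨-, h | h⟩ <;> omega
  -- every vertex has positive degree
  have hdegpos : ∀ v : Fin n, 0 < T.degree v := by
    intro v
    rw [SimpleGraph.degree_pos_iff_exists_adj]
    have hw' : ∃ w : Fin n, w ≠ v := by
      by_cases h : v.val = 0
      · exact ⟨⟨1, by omega⟩, by intro hh; rw [← hh] at h; simp at h⟩
      · exact ⟨⟨0, by omega⟩, by intro hh; rw [← hh] at h; simp at h⟩
    rcases hw' with ⟨w, hw⟩
    obtain ⟨p⟩ := hconn v w
    cases p with
    | nil => exact absurd rfl hw.symm
    | cons h q => exact ⟨_, h⟩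
  -- pendant vertices are adjacent only to 0
  have hpend : ∀ {p u : Fin n}, n - k ≤ p.val → T.Adj p u → u = (0 : Fin n) := by
    intro p u hp hadj'
    have := hle hadj'
    rw [oneJoinCliquePlusIso, SimpleGraph.fromRel_adj] at this
    have hu0 : u.val = 0 := by
      rcases this with ⟨hne, h | h⟩ <;> rcases h with h | h <;> omega
    exact Fin.ext (by simp [hu0])
  -- so 0 is adjacent to every pendant
  have h0pend : ∀ p : Fin n, n - k ≤ p.val → T.Adj (0 : Fin n) p := by
    intro p hp
    obtain ⟨u, hu⟩ := (SimpleGraph.degree_pos_iff_exists_adj T p).1 (hdegpos p)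
    have := hpend hp hu
    subst this
    exact hu.symm
  -- there is a clique vertex adjacent to 0
  have hclique : ∃ c : Fin n, c.val ≠ 0 ∧ c.val < n - k ∧ T.Adj (0 : Fin n) c := by
    have aux : ∀ {v u : Fin n} (w : T.Walk v u), u = (0 : Fin n) → v.val ≠ 0 →
        v.val < n - k → ∃ c : Fin n, c.val ≠ 0 ∧ c.val < n - k ∧ T.Adj (0 : Fin n) c := by
      intro v u w
      induction w with
      | nil => intro h hv _; exfalso; apply hv; rw [h]; rfl
      | @cons a b c hab p ih =>
        intro hc ha ha'
        by_cases hb : b.val = 0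
        · have hb0 : b = (0 : Fin n) := Fin.ext hb
          exact ⟨a, ha, ha', hb0 ▸ hab.symm⟩
        · have := hadj hab ha hb
          exact ih hc hb this.2
    have h1 : (⟨1, by omega⟩ : Fin n).val ≠ 0 := by simp
    obtain ⟨p⟩ := hconn (⟨1, by omega⟩ : Fin n) 0
    exact aux p rfl h1 (by simp; omega)
  -- degree of 0 is at least k + 1
  obtain ⟨c, hc0, hck, hc⟩ := hclique
  have hdeg0 : k + 1 ≤ T.degree (0 : Fin n) := by
    classical
    have hsub : insert c (univ.filter fun v : Fin n => n - k ≤ v.val)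
        ⊆ T.neighborFinset (0 : Fin n) := by
      intro x hx
      rw [Finset.mem_insert] at hx
      rw [SimpleGraph.mem_neighborFinset]
      rcases hx with rfl | hx
      · exact hc
      · exact h0pend x (by simpa using hx)
    have hcard : (univ.filter fun v : Fin n => n - k ≤ v.val).card = k := by
      have : (univ.filter fun v : Fin n => n - k ≤ v.val) =
          (Finset.Ico (n - k) n).attachFin (fun m hm => (Finset.mem_Ico.1 hm).2) := by
        ext v
        simp [Finset.mem_attachFin, Finset.mem_Ico, v.isLt]
      rw [this, Finset.card_attachFin, Nat.card_Ico]
      omega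
    have hnotmem : c ∉ (univ.filter fun v : Fin n => n - k ≤ v.val) := by
      simp; omega
    calc k + 1 = (insert c (univ.filter fun v : Fin n => n - k ≤ v.val)).card := by
            rw [Finset.card_insert_of_notMem hnotmem, hcard]
      _ ≤ (T.neighborFinset (0 : Fin n)).card := Finset.card_le_card hsub
      _ = T.degree (0 : Fin n) := rfl
  -- counting
  set L := (univ : Finset (Fin n)).filter (fun v => T.degree v = 1) with hL
  have h0notL : (0 : Fin n) ∉ L := by
    simp [hL]; omega
  have hsum : ∑ v : Fin n, T.degree v = 2 * (n - 1) := by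
    rw [SimpleGraph.sum_degrees_eq_twice_card_edges]
    have := hT.card_edgeFinset
    simp only [Fintype.card_fin] at this
    omega
  have hErase : T.degree (0 : Fin n) + ∑ v ∈ (univ : Finset (Fin n)).erase 0, T.degree v
      = ∑ v : Fin n, T.degree v :=
    by exact Finset.add_sum_erase (univ : Finset (Fin n)) (fun v => T.degree v) (Finset.mem_univ 0)
  have hbound : ∑ v ∈ (univ : Finset (Fin n)).erase 0, (if T.degree v = 1 then 1 else 2)
      ≤ ∑ v ∈ (univ : Finset (Fin n)).erase 0, T.degree v := by
    apply Finset.sum_le_sum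
    intro v _
    by_cases h : T.degree v = 1
    · simp [h]
    · simp only [h, if_false]
      have := hdegpos v
      omega
  have hfilterL : ((univ : Finset (Fin n)).erase 0).filter (fun v => T.degree v = 1) = L := by
    ext v
    simp only [Finset.mem_filter, Finset.mem_erase, Finset.mem_univ, true_and, and_true, hL]
    constructor
    · exact fun h => h.2
    · intro h
      refine ⟨?_, h⟩
      rintro rfl
      omega
  have hcardErase : ((univ : Finset (Fin n)).erase 0).card = n - 1 := by
    rw [Finset.card_erase_of_mem (Finset.mem_univ 0), Finset.card_univ, Fintype.card_fin]
  have hLle : L.card ≤ n - 1 := by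
    rw [← hcardErase, ← hfilterL]
    exact Finset.card_filter_le _ _
  have hsplit : ∑ v ∈ (univ : Finset (Fin n)).erase 0,
      (if T.degree v = 1 then 1 else 2)
      = L.card + 2 * ((n - 1) - L.card) := by
    rw [Finset.sum_ite]
    simp only [Finset.sum_const, smul_eq_mul, mul_one]
    rw [hfilterL]
    have hnot : (((univ : Finset (Fin n)).erase 0).filter (fun v => ¬ T.degree v = 1)).card
        = (n - 1) - L.card := by
      have := Finset.card_filter_add_card_filter_not
        (s := (univ : Finset (Fin n)).erase 0) (p := fun v => T.degree v = 1)
      rw [hfilterL] at this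
      omega
    rw [hnot]
    omega
  omega
end

section
/- Let k ≥ 1 and n ≥ k + 3 be integers. The graph K₁ ∨ (K_{n−k−2} + (k+1)K₁) has no spanning tree with leaf degree at most k; that is, every spanning tree of K₁ ∨ (K_{n−k−2} + (k+1)K₁) has a vertex adjacent in the tree to at least k + 1 leaves. -/
open Finset
open scoped Classical

/-- The graph `K₁ ∨ (K_{n-k-2} + (k+1)K₁)` on `n` vertices: vertex `0` is joined
to everything, vertices `0, …, n-k-2` form a clique `K_{n-k-1}`, and the last
`k+1` vertices are only adjacent to vertex `0`. -/
def oneJoinCliquePlusIso' (n k : ℕ) : SimpleGraph (Fin n) :=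
  SimpleGraph.fromRel fun i j =>
    i.val = 0 ∨ (i.val < n - (k + 1) ∧ j.val < n - (k + 1))

/-!
Each of the `k + 1` isolated vertices of `K_{n-k-2} + (k+1)K₁` has the cone vertex as its only
neighbour in the whole graph. A spanning tree must reach it, so in the tree it is a leaf hanging
from the cone vertex, which therefore has leaf degree at least `k + 1`.
-/

namespace SimpleGraph

variable {V : Type*} {G T : SimpleGraph V} {u z : V}

theorem Connected.adj_of_forall_adj_eq (hT : T.Connected) (hne : u ≠ z)
    (h : ∀ w, T.Adj u w → w = z) : T.Adj u z := by
  obtain ⟨p⟩ := hT.preconnected u z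
  cases p with
  | nil => exact absurd rfl hne
  | cons hadj _ => exact h _ hadj ▸ hadj

theorem Connected.neighborFinset_eq_singleton [Fintype V] [DecidableRel T.Adj]
    (hT : T.Connected) (hne : u ≠ z) (h : ∀ w, T.Adj u w → w = z) :
    T.neighborFinset u = {z} := by
  ext w
  simp only [mem_neighborFinset, Finset.mem_singleton]
  exact ⟨h w, fun hw => hw ▸ hT.adj_of_forall_adj_eq hne h⟩

theorem card_le_card_adj_leaves [Fintype V] [DecidableRel T.Adj] (hT : T.Connected)
    (hle : T ≤ G) (S : Finset V) (hS : ∀ u ∈ S, u ≠ z ∧ ∀ w, G.Adj u w → w = z) :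
    #S ≤ #{u | T.Adj z u ∧ T.degree u = 1} := by
  refine card_le_card fun u hu => ?_
  obtain ⟨hne, hG⟩ := hS u hu
  have hT' : ∀ w, T.Adj u w → w = z := fun w hw => hG w (hle hw)
  rw [mem_filter]
  refine ⟨mem_univ u, (hT.adj_of_forall_adj_eq hne hT').symm, ?_⟩
  rw [← card_neighborFinset_eq_degree, hT.neighborFinset_eq_singleton hne hT', card_singleton]

end SimpleGraph

theorem oneJoinCliquePlusIso'_adj_val_eq_zero {n k : ℕ} (hkn : k + 1 < n) {u w : Fin n}
    (hu : n - (k + 1) ≤ u.val) (hadj : (oneJoinCliquePlusIso' n k).Adj u w) : w.val = 0 := by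
  rw [oneJoinCliquePlusIso', SimpleGraph.fromRel_adj] at hadj
  omega

theorem extremal_graph_no_spanning_tree_small_leaf_degree_general {n k : ℕ}
    (hn : k + 3 ≤ n) (T : SimpleGraph (Fin n))
    (hle : T ≤ oneJoinCliquePlusIso' n k) (hT : T.IsTree) :
    ∃ v, k + 1 ≤ (univ.filter fun u => T.Adj v u ∧ T.degree u = 1).card := by
  have hkn : k + 1 < n := by omega
  refine ⟨⟨0, by omega⟩, ?_⟩
  calc k + 1 = #(Ici (⟨n - (k + 1), by omega⟩ : Fin n)) := by rw [Fin.card_Ici]; dsimp only; omega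
    _ ≤ _ := SimpleGraph.card_le_card_adj_leaves hT.connected hle _ fun u hu => by
      have hu : n - (k + 1) ≤ u.val := Fin.le_def.mp (mem_Ici.mp hu)
      exact ⟨Fin.ne_of_val_ne (by dsimp only; omega), fun w hw =>
        Fin.ext (oneJoinCliquePlusIso'_adj_val_eq_zero hkn hu hw)⟩

/-- **Lemma.**  For `k ≥ 1` and `n ≥ k + 3`, the graph
`K₁ ∨ (K_{n-k-2} + (k+1)K₁)` has no spanning tree with leaf degree at most `k`:
every spanning tree of it has a vertex adjacent (in the tree) to at least
`k + 1` leaves. -/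
theorem extremal_graph_no_spanning_tree_small_leaf_degree {n k : ℕ}
    (hk : 1 ≤ k) (hn : k + 3 ≤ n) (T : SimpleGraph (Fin n))
    (hle : T ≤ oneJoinCliquePlusIso' n k) (hT : T.IsTree) :
    ∃ v, k + 1 ≤ (univ.filter fun u => T.Adj v u ∧ T.degree u = 1).card :=
  extremal_graph_no_spanning_tree_small_leaf_degree_general hn T hle hT
end

section
/- Let k ≥ 2 be an integer and let H be a connected graph of order n. If H contains a clique on at least n − k + 1 vertices, then H has a spanning k-ended-tree (a spanning tree with at most k leaves). -/
open Finset
open scoped Classical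

/-!
Order a clique `s ≠ V` as a path starting at a vertex `a` that has a neighbour `y` outside `s`,
and hang every vertex outside `s` on a shortest path towards `a`. Every vertex of `s` other than
the far end of the path then has a child in this spanning tree (`a` has `y`), so all leaves but
one lie outside `s`. Shrinking the clique to `n - k + 1` vertices makes this at most `k` leaves.
-/

namespace SimpleGraph

variable {V : Type*}

def parentGraph (p : V → V) : SimpleGraph V := fromRel fun u v => p u = v

section ParentGraph

variable {p : V → V} {r : V} {f : V → ℕ}

@[simp]
lemma parentGraph_adj {u v : V} : (parentGraph p).Adj u v ↔ u ≠ v ∧ (p u = v ∨ p v = u) :=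
  fromRel_adj _ u v

lemma parentGraph_le_iff {H : SimpleGraph V} :
    parentGraph p ≤ H ↔ ∀ v, p v ≠ v → H.Adj v (p v) := by
  refine ⟨fun h v hv => h (parentGraph_adj.2 ⟨hv.symm, .inl rfl⟩), fun h u v huv => ?_⟩
  obtain ⟨hne, rfl | rfl⟩ := parentGraph_adj.1 huv
  exacts [h u hne.symm, (h v hne).symm]

lemma parentGraph_adj_self (hf : ∀ v, v ≠ r → f (p v) < f v) {v : V} (hv : v ≠ r) :
    (parentGraph p).Adj v (p v) :=
  parentGraph_adj.2 ⟨fun h => (hf v hv).ne (congrArg f h.symm), .inl rfl⟩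

lemma parentGraph_reachable (hf : ∀ v, v ≠ r → f (p v) < f v) (v : V) :
    (parentGraph p).Reachable v r := by
  induction hv : f v using Nat.strong_induction_on generalizing v with
  | _ n ih =>
    by_cases hvr : v = r
    · rw [hvr]
    exact (parentGraph_adj_self hf hvr).reachable.trans (ih _ (hv ▸ hf v hvr) _ rfl)

lemma isTree_parentGraph [Finite V] (hr : p r = r) (hf : ∀ v, v ≠ r → f (p v) < f v) :
    (parentGraph p).IsTree := by
  refine isTree_iff_connected_and_card.2 ⟨?_, ?_⟩
  · have : Nonempty V := ⟨r⟩
    exact .mk fun u v => (parentGraph_reachable hf u).trans (parentGraph_reachable hf v).symm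
  let e : {v // v ≠ r} → (parentGraph p).edgeSet := fun v =>
    ⟨s(v, p v), parentGraph_adj_self hf v.2⟩
  have he : Function.Bijective e := by
    refine ⟨fun ⟨u, hu⟩ ⟨v, hv⟩ huv => ?_, ?_⟩
    · rcases Sym2.eq_iff.1 (congrArg Subtype.val huv) with ⟨rfl, -⟩ | ⟨hu', hv'⟩
      · rfl
      · dsimp only at hu' hv'
        have h₁ := hf u hu
        have h₂ := hf v hv
        rw [hv'] at h₁
        rw [← hu'] at h₂
        omega
    · rintro ⟨e, he⟩
      induction e using Sym2.ind with
      | _ u v =>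
      obtain ⟨hne, huv | hvu⟩ := parentGraph_adj.1 he
      · exact ⟨⟨u, by rintro rfl; exact hne (hr.symm.trans huv)⟩, Subtype.ext (by simp [e, huv])⟩
      · exact ⟨⟨v, by rintro rfl; exact hne (hr.symm.trans hvu).symm⟩,
          Subtype.ext (by simp [e, hvu, Sym2.eq_swap])⟩
  have := Fintype.ofFinite V
  rw [← Nat.card_congr (Equiv.ofBijective e he), Nat.card_eq_fintype_card,
    Nat.card_eq_fintype_card, Fintype.card_subtype_compl, Fintype.card_subtype_eq]
  have := Fintype.card_pos_iff.2 ⟨r⟩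
  omega

variable [Fintype V]

lemma two_le_degree_parentGraph (hr : p r = r) (hf : ∀ v, v ≠ r → f (p v) < f v) {u v : V}
    (hvr : v ≠ r) (huv : u ≠ v) (hpu : p u = v) : 2 ≤ (parentGraph p).degree v := by
  have hur : u ≠ r := by rintro rfl; exact hvr (hpu.symm.trans hr)
  have hne : p v ≠ u := by
    intro h
    have h₁ := hf u hur
    have h₂ := hf v hvr
    rw [hpu] at h₁
    rw [h] at h₂
    omega
  have hsub : ({p v, u} : Finset V) ⊆ (parentGraph p).neighborFinset v := by
    intro w hw
    rcases mem_insert.1 hw with rfl | hw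
    · simpa using parentGraph_adj_self hf hvr
    · rw [mem_singleton.1 hw, mem_neighborFinset, parentGraph_adj]
      exact ⟨huv.symm, .inr hpu⟩
  rw [← card_neighborFinset_eq_degree, ← card_pair hne]
  exact card_le_card hsub

lemma card_leaves_parentGraph_le [DecidableEq V] (hr : p r = r)
    (hf : ∀ v, v ≠ r → f (p v) < f v) {s : Finset V} (hs : ∀ v ∈ s, ∃ u, u ≠ v ∧ p u = v) :
    #{v | (parentGraph p).degree v = 1} ≤ #sᶜ + 1 := by
  have hleaves : ({v | (parentGraph p).degree v = 1} : Finset V) ⊆ insert r sᶜ := by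
    intro v hv
    by_cases hvr : v = r
    · exact hvr ▸ mem_insert_self _ _
    refine mem_insert_of_mem (mem_compl.2 fun hvs => ?_)
    obtain ⟨u, huv, hpu⟩ := hs v hvs
    have := two_le_degree_parentGraph hr hf hvr huv hpu
    rw [(mem_filter.1 hv).2] at this
    omega
  exact (card_le_card hleaves).trans (card_insert_le _ _)

end ParentGraph

lemma Connected.exists_parent_dist_lt {H : SimpleGraph V} (hH : H.Connected) (a : V) :
    ∃ q : V → V, ∀ v, v ≠ a → H.Adj v (q v) ∧ H.dist (q v) a < H.dist v a := by
  have : ∀ v, ∃ u, v ≠ a → H.Adj v u ∧ H.dist u a < H.dist v a := fun v => by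
    obtain ⟨w, hw⟩ := hH.exists_walk_length_eq_dist v a
    cases w with
    | nil => exact ⟨a, fun h => (h rfl).elim⟩
    | cons h w =>
      have := dist_le w
      rw [Walk.length_cons] at hw
      exact ⟨_, fun _ => ⟨h, by omega⟩⟩
  choose q hq using this
  exact ⟨q, hq⟩

end SimpleGraph

open Function in
/-- `p` runs through `s` as a path from `a` to `r`, along which the rank `f` decreases. -/
lemma Finset.exists_parent_path {V : Type*} (s : Finset V) {a : V} (ha : a ∈ s) :
    ∃ r ∈ s, ∃ (p : V → V) (f : V → ℕ), p r = r ∧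
      (∀ v ∈ s, v ≠ r → p v ∈ s ∧ f (p v) < f v) ∧
      ∀ v ∈ s, v ≠ a → ∃ u ∈ s, u ≠ v ∧ p u = v := by
  induction s using Finset.strongInduction generalizing a with
  | H s ih =>
  rcases (s.erase a).eq_empty_or_nonempty with hs | ⟨b, hb⟩
  · refine ⟨a, ha, id, fun _ => 0, rfl, ?_, ?_⟩ <;>
    · intro v hv hva
      simpa [hs] using mem_erase.2 ⟨hva, hv⟩
  -- prepend `a` to a path through `s.erase a` starting at `b`
  obtain ⟨r, hr, p, f, hpr, hp, hchild⟩ := ih _ (erase_ssubset ha) hb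
  have hba := ne_of_mem_erase hb
  refine ⟨r, mem_of_mem_erase hr, update p a b, update f a (f b + 1), ?_, ?_, ?_⟩
  · rwa [update_of_ne (ne_of_mem_erase hr)]
  · intro v hv hvr
    by_cases hva : v = a
    · subst hva
      simp [update_of_ne hba, mem_of_mem_erase hb]
    obtain ⟨hpv, hfv⟩ := hp v (mem_erase.2 ⟨hva, hv⟩) hvr
    rw [update_of_ne hva, update_of_ne hva, update_of_ne (ne_of_mem_erase hpv)]
    exact ⟨mem_of_mem_erase hpv, hfv⟩
  · intro v hv hva
    by_cases hvb : v = b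
    · exact ⟨a, ha, hvb ▸ hba.symm, by rw [update_self, hvb]⟩
    obtain ⟨u, hu, huv, hpu⟩ := hchild v (mem_erase.2 ⟨hva, hv⟩) hvb
    exact ⟨u, mem_of_mem_erase hu, huv, by rw [update_of_ne (ne_of_mem_erase hu), hpu]⟩

namespace SimpleGraph

variable {V : Type*} [Fintype V] [DecidableEq V]

theorem Connected.exists_isTree_le_card_leaves_le {H : SimpleGraph V} (hH : H.Connected)
    {s : Finset V} (hs : H.IsClique s) (hs₀ : s.Nonempty) (hsc : sᶜ.Nonempty) :
    ∃ T ≤ H, T.IsTree ∧ #{v | T.degree v = 1} ≤ #sᶜ + 1 := by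
  obtain ⟨⟨⟨a, y⟩, hay⟩, -, ha, hy⟩ :=
    (hH hs₀.choose hsc.choose).some.exists_boundary_dart s hs₀.choose_spec
      (by simpa using hsc.choose_spec)
  simp only [Finset.mem_coe] at ha hy
  obtain ⟨r, hr, p₀, f₀, hp₀r, hp₀, hchild⟩ := s.exists_parent_path ha
  obtain ⟨q, hq⟩ := hH.exists_parent_dist_lt a
  let p : V → V := fun v => if v ∈ s then p₀ v else q v
  let f : V → ℕ := fun v => if v ∈ s then f₀ v else s.sup f₀ + 1 + H.dist v a
  have hpr : p r = r := by simp [p, hr, hp₀r]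
  have hf : ∀ v, v ≠ r → f (p v) < f v := by
    intro v hvr
    by_cases hv : v ∈ s
    · simp [p, f, hv, hp₀ v hv hvr]
    have hva : v ≠ a := by rintro rfl; exact hv ha
    by_cases hqv : q v ∈ s
    · simp only [p, f, hv, hqv, if_true, if_false]
      have := Finset.le_sup (f := f₀) hqv
      omega
    · simp [p, f, hv, hqv, (hq v hva).2]
  have hle : parentGraph p ≤ H := by
    refine parentGraph_le_iff.2 fun v hpv => ?_
    by_cases hv : v ∈ s
    · have hvr : v ≠ r := by rintro rfl; exact hpv hpr
      simp only [p, hv, if_true] at hpv ⊢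
      exact hs hv (hp₀ v hv hvr).1 hpv.symm
    · have hva : v ≠ a := by rintro rfl; exact hv ha
      simpa [p, hv] using (hq v hva).1
  have hparent : ∀ v ∈ s, ∃ u, u ≠ v ∧ p u = v := by
    intro v hv
    by_cases hva : v = a
    · have hya : y ≠ a := by rintro rfl; exact hy ha
      have hqy : q y = a := by
        have := (hq y hya).2
        rw [dist_eq_one_iff_adj.2 hay.symm] at this
        exact hH.dist_eq_zero_iff.1 (by omega)
      exact ⟨y, hva ▸ hya, by simp [p, hy, hqy, hva]⟩
    · obtain ⟨u, hu, huv, hpu⟩ := hchild v hv hva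
      exact ⟨u, huv, by simp [p, hu, hpu]⟩
  exact ⟨parentGraph p, hle, isTree_parentGraph hpr hf, card_leaves_parentGraph_le hpr hf hparent⟩

end SimpleGraph

/-- **Lemma.**  Let `k ≥ 2` and let `H` be a connected graph of order `n`
containing a clique on at least `n - k + 1` vertices.  Then `H` has a spanning
`k`-ended-tree. -/
theorem clique_spanning_k_ended_tree {n k : ℕ} (hk : 2 ≤ k)
    (H : SimpleGraph (Fin n)) (hH : H.Connected)
    (s : Finset (Fin n)) (hs : H.IsClique ↑s)
    (hcard : (n : ℤ) - (k : ℤ) + 1 ≤ (s.card : ℤ)) :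
    HasSpanningKEndedTree H k := by
  by_cases hnk : n ≤ k
  · obtain ⟨T, hTH, hT⟩ := hH.exists_isTree_le
    exact ⟨T, hTH, hT, (card_filter_le _ _).trans (by simpa using hnk)⟩
  obtain ⟨t, hts, ht⟩ := exists_subset_card_eq (s := s) (n := n - k + 1) (by omega)
  have ht₀ : t.Nonempty := card_pos.1 (by omega)
  have htc : tᶜ.Nonempty := card_pos.1 (by rw [card_compl, Fintype.card_fin]; omega)
  obtain ⟨T, hTH, hT, hleaves⟩ :=
    hH.exists_isTree_le_card_leaves_le (hs.subset (by simpa using hts)) ht₀ htc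
  refine ⟨T, hTH, hT, hleaves.trans ?_⟩
  rw [card_compl, Fintype.card_fin]
  omega
end

section
/- Let k ≥ 2 be an integer and let H be a connected graph of order n containing a clique C on n − k vertices. If some two vertices of V(H) \ C are adjacent in H, then H has a spanning k-ended-tree (a spanning tree with at most k leaves). -/
open Finset
open scoped Classical

/-! A path that runs through all of `C` and then across the edge `uv` has at least `|C| + 1`
edges: take any path from `C` that passes through `u` and `v`, and prepend the vertices of the
clique that it misses one at a time. Extend this path to a spanning tree of `H`. Every inner
vertex of the path keeps degree at least `2` in the tree, so the leaves lie among the at most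
`n - |C| = k` vertices that are not inner vertices of the path. -/

namespace SimpleGraph

variable {V : Type*} {G : SimpleGraph V}

theorem Walk.IsPath.card_support_toFinset {u v : V} {p : G.Walk u v} (hp : p.IsPath) :
    #p.support.toFinset = p.length + 1 := by
  rw [List.toFinset_card_of_nodup hp.support_nodup, length_support]

theorem Walk.IsPath.isAcyclic_spanningCoe_toSubgraph {u v : V} {p : G.Walk u v}
    (hp : p.IsPath) : p.toSubgraph.spanningCoe.IsAcyclic := by
  induction p with
  | nil => exact IsAcyclic.anti (fun _ _ h => by simp at h) isAcyclic_bot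
  | @cons a b _ h p ih =>
    rw [cons_isPath_iff] at hp
    have hsplit :
        (cons h p).toSubgraph.spanningCoe = p.toSubgraph.spanningCoe ⊔ edge a b := by
      ext x y
      simp [Walk.toSubgraph, edge_adj, or_comm]
    have hnreach : ¬ p.toSubgraph.spanningCoe.Reachable a b := by
      rintro ⟨q⟩
      cases q with
      | nil => exact h.ne rfl
      | cons hadj _ => exact hp.2 (p.mem_verts_toSubgraph.mp hadj.fst_mem)
    rw [hsplit]
    exact (ih hp.1).sup_edge_of_not_reachable hnreach

theorem Walk.IsPath.two_le_degree_of_toSubgraph_le [Fintype V] {T : SimpleGraph V} {u v z : V}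
    {p : G.Walk u v} (hp : p.IsPath) (hT : p.toSubgraph.spanningCoe ≤ T)
    (hz : z ∈ p.support) (hzu : z ≠ u) (hzv : z ≠ v) : 2 ≤ T.degree z := by
  obtain ⟨i, rfl, hi⟩ := Walk.mem_support_iff_exists_getVert.mp hz
  have hi0 : i ≠ 0 := by rintro rfl; exact hzu p.getVert_zero
  have hiL : i < p.length := lt_of_le_of_ne hi (by rintro rfl; exact hzv p.getVert_length)
  rw [← card_neighborSet_eq_degree, ← Nat.card_eq_fintype_card, Nat.card_coe_set_eq,
    ← hp.ncard_neighborSet_toSubgraph_internal_eq_two hi0 hiL]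
  exact Set.ncard_le_ncard fun _ hw => hT hw

theorem Connected.hasSpanningKEndedTree_of_isPath [Fintype V] (hG : G.Connected) {k : ℕ}
    {u v : V} {p : G.Walk u v} (hp : p.IsPath) (hk : Fintype.card V + 1 ≤ k + p.length) :
    HasSpanningKEndedTree G k := by
  obtain ⟨T, hpT, hTG, hT⟩ := hG.exists_isTree_le_of_le_of_isAcyclic
    p.toSubgraph.spanningCoe_le hp.isAcyclic_spanningCoe_toSubgraph
  refine ⟨T, hTG, hT, ?_⟩
  set inner := (p.support.toFinset.erase u).erase v
  have hleaves : univ.filter (fun x => T.degree x = 1) ⊆ univ \ inner := by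
    intro x hx
    simp only [inner, mem_filter, mem_univ, true_and, mem_sdiff, mem_erase,
      List.mem_toFinset] at hx ⊢
    rintro ⟨hxv, hxu, hxp⟩
    have := hp.two_le_degree_of_toSubgraph_le hpT hxp hxu hxv
    omega
  have h₁ : #p.support.toFinset - 1 ≤ #(p.support.toFinset.erase u) := pred_card_le_card_erase
  have h₂ : #(p.support.toFinset.erase u) - 1 ≤ #inner := pred_card_le_card_erase
  have := card_le_card hleaves
  rw [card_sdiff_of_subset (subset_univ _), card_univ] at this
  have := hp.card_support_toFinset
  omega

theorem Walk.IsPath.exists_isPath_length_eq_add_card {a b : V} {p : G.Walk a b} (hp : p.IsPath)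
    {s : Finset V} (hs : G.IsClique (insert a (s : Set V))) (hsp : ∀ x ∈ s, x ∉ p.support) :
    ∃ a', ∃ q : G.Walk a' b, q.IsPath ∧ q.length = p.length + #s := by
  induction s using Finset.induction_on generalizing a with
  | empty => exact ⟨a, p, hp, rfl⟩
  | @insert x s hxs ih =>
    have hxp : x ∉ p.support := hsp x (mem_insert_self x s)
    have hxa : G.Adj x a := hs (by simp) (by simp) fun h => hxp (h ▸ p.start_mem_support)
    obtain ⟨a', q, hq, hlen⟩ := ih ((cons_isPath_iff hxa p).mpr ⟨hp, hxp⟩)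
      (hs.subset (by intro y; simp +contextual))
      (fun y hy => by
        rw [support_cons, List.mem_cons, not_or]
        exact ⟨fun h => hxs (h ▸ hy), hsp y (mem_insert_of_mem hy)⟩)
    refine ⟨a', q, hq, ?_⟩
    rw [hlen, length_cons, card_insert_of_notMem hxs]
    ring

theorem Walk.IsPath.card_add_one_le_length_of_mem_support {a b u v : V} {p : G.Walk a b}
    (hp : p.IsPath) {C : Finset V} (hu : u ∉ C) (hv : v ∉ C) (huv : u ≠ v)
    (hup : u ∈ p.support) (hvp : v ∈ p.support) :
    #{x ∈ C | x ∈ p.support} + 1 ≤ p.length := by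
  have hsub : {x ∈ C | x ∈ p.support} ⊆ (p.support.toFinset.erase u).erase v := by
    intro x hx
    simp only [mem_filter] at hx
    simp only [mem_erase, List.mem_toFinset]
    exact ⟨fun h => hv (h ▸ hx.1), fun h => hu (h ▸ hx.1), hx.2⟩
  have h₁ := card_erase_add_one (s := p.support.toFinset) (a := u) (by simpa using hup)
  have h₂ := card_erase_add_one (s := p.support.toFinset.erase u) (a := v)
    (by simpa using ⟨huv.symm, hvp⟩)
  have := card_le_card hsub
  have := hp.card_support_toFinset
  omega

theorem Connected.exists_isPath_card_add_one_le_length (hG : G.Connected) {C : Finset V}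
    (hC : G.IsClique (C : Set V)) {u v : V} (hu : u ∉ C) (hv : v ∉ C) (huv : G.Adj u v) :
    ∃ a b, ∃ p : G.Walk a b, p.IsPath ∧ #C + 1 ≤ p.length := by
  rcases C.eq_empty_or_nonempty with rfl | ⟨c, hc⟩
  · exact ⟨u, v, huv.toWalk, by simpa using huv.ne, by simp⟩
  obtain ⟨b, P, hP, hup, hvp⟩ :
      ∃ b, ∃ P : G.Walk c b, P.IsPath ∧ u ∈ P.support ∧ v ∈ P.support := by
    let Q := (hG.preconnected c u).some.bypass
    by_cases hvQ : v ∈ Q.support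
    · exact ⟨u, Q, Walk.bypass_isPath _, Q.end_mem_support, hvQ⟩
    · exact ⟨v, Q.concat huv, (Walk.bypass_isPath _).concat hvQ huv,
        by simp [Walk.support_concat], by simp [Walk.support_concat]⟩
  obtain ⟨a, q, hq, hlen⟩ := hP.exists_isPath_length_eq_add_card (s := {x ∈ C | x ∉ P.support})
    (hC.subset fun x => by
      simp only [Set.mem_insert_iff, coe_filter, Set.mem_ofPred_eq]
      rintro (rfl | ⟨hx, -⟩) <;> assumption)
    fun x hx => (mem_filter.mp hx).2
  refine ⟨a, b, q, hq, ?_⟩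
  have := card_filter_add_card_filter_not (s := C) (· ∈ P.support)
  have := hP.card_add_one_le_length_of_mem_support hu hv huv.ne hup hvp
  omega

end SimpleGraph

theorem clique_plus_edge_spanning_k_ended_tree_general {n k : ℕ}
    (H : SimpleGraph (Fin n)) (hH : H.Connected)
    (C : Finset (Fin n)) (hC : H.IsClique ↑C) (hcard : C.card = n - k)
    (u v : Fin n) (hu : u ∉ C) (hv : v ∉ C) (huv : H.Adj u v) :
    HasSpanningKEndedTree H k := by
  obtain ⟨a, b, p, hp, hlen⟩ := hH.exists_isPath_card_add_one_le_length hC hu hv huv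
  exact hH.hasSpanningKEndedTree_of_isPath hp (by rw [Fintype.card_fin]; omega)

/-- **Lemma.**  Let `k ≥ 2` and let `H` be a connected graph of order `n`
containing a clique `C` on `n - k` vertices.  If some two vertices outside `C`
are adjacent in `H`, then `H` has a spanning `k`-ended-tree. -/
theorem clique_plus_edge_spanning_k_ended_tree {n k : ℕ} (hk : 2 ≤ k)
    (H : SimpleGraph (Fin n)) (hH : H.Connected)
    (C : Finset (Fin n)) (hC : H.IsClique ↑C) (hcard : C.card = n - k)
    (u v : Fin n) (hu : u ∉ C) (hv : v ∉ C) (huv : H.Adj u v) :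
    HasSpanningKEndedTree H k :=
  clique_plus_edge_spanning_k_ended_tree_general H hH C hC hcard u v hu hv huv
end

section
/- Let G be a connected graph of order n, let k be an integer with 2 ≤ k ≤ n − 1, and let u and v be nonadjacent vertices of G with d(u) + d(v) ≥ n − 1. Let G' be the graph obtained from G by adding the edge uv. Then G has a spanning k-ended-tree if and only if G' has a spanning k-ended-tree. -/
/-!
Let `T` be a spanning tree of `G + uv` with at most `k` leaves that uses the edge `uv`
(otherwise `T` already lies in `G`). Root `T` at `u` and let `D` be the branch hanging from `v`,
i.e. the vertices closer to `v` than to `u`. If some `G`-neighbour `y ∈ D` of `u` is a leaf of `T`,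
then `T - uv + uy` has no more leaves than `T`. If some `G`-neighbour `x ∈ D` of `u` has a child `w`
adjacent to `v` in `G`, then `T - xw + vw - uv + ux` has the same degrees as `T`. Otherwise every
`G`-neighbour of `u` in `D` has a child, which is not a `G`-neighbour of `v`, and distinct vertices
have distinct children, so `|N(u) ∩ D| + |N(v) ∩ D| ≤ |D| - 1`. Adding the same bound for the
branch of `u` gives `d(u) + d(v) ≤ n - 2`.
-/

open Finset
open scoped Classical

namespace SimpleGraph

variable {V : Type*} {G T : SimpleGraph V} {a b c d u v w x y : V}

lemma Reachable.deleteEdges_of_dist_lt_dist_add_dist (h : G.Reachable x y) {s : Set (Sym2 V)}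
    (hs : ∀ e ∈ s, ∃ z ∈ e, G.dist x y < G.dist x z + G.dist z y) :
    (G.deleteEdges s).Reachable x y := by
  obtain ⟨p, hp⟩ := h.exists_walk_length_eq_dist
  refine ⟨p.toDeleteEdges s fun e he hes => ?_⟩
  obtain ⟨z, hze, hlt⟩ := hs e hes
  have hz := p.mem_support_of_mem_edges he hze
  have hlen := congrArg Walk.length (p.take_spec hz)
  rw [Walk.length_append] at hlen
  have := dist_le (p.takeUntil z hz)
  have := dist_le (p.dropUntil z hz)
  omega

lemma IsAcyclic.not_reachable_deleteEdges (hT : T.IsAcyclic) (hab : T.Adj a b)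
    (hc : (T.deleteEdges {s(a, b)}).Reachable a c) (hd : (T.deleteEdges {s(a, b)}).Reachable b d) :
    ¬ (T.deleteEdges {s(a, b)}).Reachable c d := fun h =>
  isAcyclic_iff_forall_adj_isBridge.mp hT hab (hc.trans (h.trans hd.symm))

def edgeSwap (T : SimpleGraph V) (a b c d : V) : SimpleGraph V :=
  T.deleteEdges {s(a, b)} ⊔ edge c d

lemma edgeSwap_le {H : SimpleGraph V} (hT : T ≤ H ⊔ edge a b) (hcd : H.Adj c d) :
    T.edgeSwap a b c d ≤ H :=
  sup_le (sdiff_le_iff.mpr (sup_comm H _ ▸ hT)) (H.edge_le_iff.mpr (.inr hcd))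

lemma IsTree.edgeSwap (hT : T.IsTree) (hab : T.Adj a b)
    (hc : (T.deleteEdges {s(a, b)}).Reachable a c) (hd : (T.deleteEdges {s(a, b)}).Reachable b d) :
    (T.edgeSwap a b c d).IsTree := by
  have hn := hT.isAcyclic.not_reachable_deleteEdges hab hc hd
  refine ⟨(connected_iff_exists_forall_reachable _).mpr ⟨c, fun z => ?_⟩,
    (hT.isAcyclic.anti (deleteEdges_le _)).sup_edge_of_not_reachable hn⟩
  have hcd : (T.edgeSwap a b c d).Adj c d :=
    Or.inr ((edge_adj ..).mpr ⟨.inl ⟨rfl, rfl⟩, fun h => hn (h ▸ .rfl)⟩)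
  have hab₁ := dist_eq_one_iff_adj.mpr hab
  rcases hT.dist_eq_dist_add_one_of_adj z hab with hzb | hza
  · have hz : (T.deleteEdges {s(a, b)}).Reachable z b :=
      (hT.connected z b).deleteEdges_of_dist_lt_dist_add_dist fun e he => by
        rw [Set.mem_singleton_iff.mp he]
        exact ⟨a, Sym2.mem_mk_left a b, by rw [dist_comm] at hab₁; omega⟩
    exact hcd.reachable.trans ((hd.symm.trans hz.symm).mono le_sup_left)
  · have hz : (T.deleteEdges {s(a, b)}).Reachable z a :=
      (hT.connected z a).deleteEdges_of_dist_lt_dist_add_dist fun e he => by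
        rw [Set.mem_singleton_iff.mp he]
        exact ⟨b, Sym2.mem_mk_right a b, by omega⟩
    exact (hc.symm.trans hz.symm).mono le_sup_left

lemma IsTree.eq_of_adj_of_dist_eq_add_one (hT : T.IsTree) {r x₁ x₂ : V}
    (h₁ : T.Adj x₁ w) (h₂ : T.Adj x₂ w)
    (hd₁ : T.dist r w = T.dist r x₁ + 1) (hd₂ : T.dist r w = T.dist r x₂ + 1) : x₁ = x₂ := by
  obtain ⟨q, hq, -⟩ := (hT.connected r w).exists_path_of_dist
  suffices ∀ x, T.Adj x w → T.dist r w = T.dist r x + 1 → x = q.penultimate from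
    (this x₁ h₁ hd₁).trans (this x₂ h₂ hd₂).symm
  intro x hx hd
  refine hT.isAcyclic.eq_penultimate_of_adj_end hq hx.symm (by_contra fun hxq => ?_)
  obtain ⟨p, hp, hpl⟩ := (hT.connected r x).exists_path_of_dist
  have hw := hT.isAcyclic.mem_support_of_ne_mem_support_of_adj_of_isPath hp hq hx hxq
  have := dist_le (p.takeUntil w hw)
  have := p.length_takeUntil_le_length hw
  omega

lemma IsTree.card_filter_dist_lt_add_card_filter_dist_lt (hT : T.IsTree) (hab : T.Adj a b)
    (s : Finset V) :
    #{x ∈ s | T.dist b x < T.dist a x} + #{x ∈ s | T.dist a x < T.dist b x} = #s := by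
  rw [← Finset.card_filter_add_card_filter_not (s := s) (fun x => T.dist b x < T.dist a x)]
  congr 2
  refine Finset.filter_congr fun x _ => ?_
  have := hT.dist_ne_of_adj x hab
  rw [dist_comm, dist_comm (u := x)] at this
  omega

variable [Fintype V]

lemma degree_edge (hab : a ≠ b) (z : V) :
    (edge a b).degree z = (if z = a then 1 else 0) + (if z = b then 1 else 0) := by
  rw [← card_neighborFinset_eq_degree]
  by_cases hza : z = a
  · subst hza
    rw [Finset.card_eq_one.mpr ⟨b, by ext; simp only [mem_neighborFinset, edge_adj]; grind⟩]
    simp [hab]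
  by_cases hzb : z = b
  · subst hzb
    rw [Finset.card_eq_one.mpr ⟨a, by ext; simp only [mem_neighborFinset, edge_adj]; grind⟩]
    simp [Ne.symm hab]
  · rw [Finset.card_eq_zero.mpr (by ext; simp [edge_adj, hza, hzb])]
    simp [hza, hzb]

lemma degree_sup_edge (h : ¬ G.Adj c d) (z : V) :
    (G ⊔ edge c d).degree z = G.degree z + (edge c d).degree z := by
  have := congrArg Finset.card (neighborFinset_sup_of_disjoint (v := z) (G.disjoint_edge.mpr h))
  rwa [Finset.card_disjUnion] at this

lemma degree_edgeSwap_add (hab : T.Adj a b) (hcd : ¬ (T.deleteEdges {s(a, b)}).Adj c d) (z : V) :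
    (T.edgeSwap a b c d).degree z + (edge a b).degree z = T.degree z + (edge c d).degree z := by
  have hT : T.deleteEdges {s(a, b)} ⊔ edge a b = T :=
    sdiff_sup_cancel (T.edge_le_iff.mpr (.inr hab))
  have h₁ : (T.edgeSwap a b c d).degree z =
      (T.deleteEdges {s(a, b)}).degree z + (edge c d).degree z := by
    convert degree_sup_edge hcd z
    rfl
  have h₂ : T.degree z = (T.deleteEdges {s(a, b)}).degree z + (edge a b).degree z := by
    convert degree_sup_edge (by simp : ¬ (T.deleteEdges {s(a, b)}).Adj a b) z
    exact hT.symm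
  omega

lemma IsTree.exists_adj_dist_eq_add_one (hT : T.IsTree) (r : V) {x : V} (hx : 1 < T.degree x) :
    ∃ w, T.Adj x w ∧ T.dist r w = T.dist r x + 1 := by
  rw [← card_neighborFinset_eq_degree, Finset.one_lt_card] at hx
  obtain ⟨a, ha, b, hb, hab⟩ := hx
  rw [mem_neighborFinset] at ha hb
  by_contra! h
  have parent : ∀ w, T.Adj x w → T.dist r x = T.dist r w + 1 := fun w hw =>
    (hT.dist_eq_dist_add_one_of_adj r hw).resolve_right (h w hw)
  exact hab (hT.eq_of_adj_of_dist_eq_add_one ha.symm hb.symm (parent a ha) (parent b hb))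

noncomputable def leaves (T : SimpleGraph V) : Finset V := {x | T.degree x = 1}

lemma hasSpanningKEndedTree_card_leaves_of_adj_leaf (hT : T.IsTree) (hle : T ≤ G ⊔ edge u v)
    (huv : T.Adj u v) (hy : T.dist v y < T.dist u y) (hGuy : G.Adj u y) (hdy : T.degree y = 1) :
    HasSpanningKEndedTree G #T.leaves := by
  have hreach : (T.deleteEdges {s(u, v)}).Reachable v y :=
    (hT.connected v y).deleteEdges_of_dist_lt_dist_add_dist fun e he => by
      rw [Set.mem_singleton_iff.mp he]
      exact ⟨u, Sym2.mem_mk_left u v, by omega⟩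
  have hdeg := degree_edgeSwap_add huv
    (fun h => hT.isAcyclic.not_reachable_deleteEdges huv .rfl hreach h.reachable)
  refine ⟨T.edgeSwap u v u y, edgeSwap_le hle hGuy, hT.edgeSwap huv .rfl hreach, ?_⟩
  calc #(T.edgeSwap u v u y).leaves ≤ #(insert v (T.leaves.erase y)) := by
        refine Finset.card_le_card fun z hz => ?_
        have := hdeg z
        rw [degree_edge huv.ne, degree_edge hGuy.ne] at this
        simp only [leaves, Finset.mem_filter, Finset.mem_univ, true_and, Finset.mem_insert,
          Finset.mem_erase] at hz ⊢
        by_cases hzv : z = v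
        · exact .inl hzv
        obtain rfl | hzy := eq_or_ne z y
        · simp [hz, hzv, hdy, hGuy.ne.symm] at this
        · simp only [hzv, hzy, if_false, add_zero] at this
          exact .inr ⟨hzy, by omega⟩
    _ ≤ #T.leaves := (Finset.card_insert_le _ _).trans
        (Finset.card_erase_add_one (by simpa [leaves] using hdy)).le

lemma hasSpanningKEndedTree_card_leaves_of_adj_child (hT : T.IsTree) (hle : T ≤ G ⊔ edge u v)
    (huv : T.Adj u v) (hx : T.dist v x < T.dist u x) (hxw : T.Adj x w)
    (hw : T.dist u w = T.dist u x + 1) (hGux : G.Adj u x) (hGvw : G.Adj v w) :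
    HasSpanningKEndedTree G #T.leaves := by
  have huv₁ := dist_eq_one_iff_adj.mpr huv
  have hxw₁ := dist_eq_one_iff_adj.mpr hxw
  have hvw : T.dist v x + 1 ≤ T.dist v w := by
    have : T.dist u w ≤ T.dist u v + T.dist v w := hT.connected.dist_triangle
    omega
  have hxu : x ≠ u := by rintro rfl; simp at hx
  have hwu : w ≠ u := by rintro rfl; simp at hw
  have hwv : w ≠ v := by rintro rfl; simp at hvw
  have hreach : (T.deleteEdges {s(u, v), s(x, w)}).Reachable v x :=
    (hT.connected v x).deleteEdges_of_dist_lt_dist_add_dist fun e he => by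
      rcases he with rfl | rfl
      · exact ⟨u, Sym2.mem_mk_left u v, by rw [dist_comm] at huv₁; omega⟩
      · exact ⟨w, Sym2.mem_mk_right x w, by rw [dist_comm] at hxw₁; omega⟩
  have hreach₁ : (T.deleteEdges {s(w, x)}).Reachable x v :=
    hreach.symm.mono (deleteEdges_anti (by simp [Sym2.eq_swap]))
  have hT₁ : (T.edgeSwap w x w v).IsTree := hT.edgeSwap hxw.symm .rfl hreach₁
  have hT₁uv : (T.edgeSwap w x w v).Adj u v := Or.inl ⟨huv, by simp [hwu.symm, hxu.symm]⟩
  have hreach₂ : ((T.edgeSwap w x w v).deleteEdges {s(u, v)}).Reachable v x := by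
    refine hreach.mono (le_trans ?_ (deleteEdges_mono le_sup_left))
    rw [deleteEdges_deleteEdges]
    exact deleteEdges_anti (by simp [Sym2.eq_swap])
  have hdeg (z : V) : ((T.edgeSwap w x w v).edgeSwap u v u x).degree z = T.degree z := by
    have h₁ := degree_edgeSwap_add hxw.symm
      (fun h => hT.isAcyclic.not_reachable_deleteEdges hxw.symm .rfl hreach₁ h.reachable) z
    have h₂ := degree_edgeSwap_add hT₁uv
      (fun h => hT₁.isAcyclic.not_reachable_deleteEdges hT₁uv .rfl hreach₂ h.reachable) z
    rw [degree_edge hxw.ne.symm, degree_edge hwv] at h₁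
    rw [degree_edge huv.ne, degree_edge hGux.ne] at h₂
    omega
  refine ⟨(T.edgeSwap w x w v).edgeSwap u v u x,
    edgeSwap_le (edgeSwap_le (le_sup_of_le_left hle) (Or.inl hGvw.symm)) hGux,
    hT₁.edgeSwap hT₁uv .rfl hreach₂, le_of_eq ?_⟩
  simp only [hdeg]
  rfl

lemma card_filter_neighborFinset_add_le (hT : T.IsTree) (huv : T.Adj u v)
    (hleaf : ∀ y, T.dist v y < T.dist u y → G.Adj u y → T.degree y ≠ 1)
    (hchild : ∀ x w, T.dist v x < T.dist u x → G.Adj u x → T.Adj x w →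
      T.dist u w = T.dist u x + 1 → ¬ G.Adj v w) :
    #{x ∈ G.neighborFinset u | T.dist v x < T.dist u x} +
      #{x ∈ G.neighborFinset v | T.dist v x < T.dist u x} + 1 ≤
      #({x | T.dist v x < T.dist u x} : Finset V) := by
  set B := {x ∈ G.neighborFinset u | T.dist v x < T.dist u x}
  set A := {x ∈ G.neighborFinset v | T.dist v x < T.dist u x}
  set D : Finset V := {x | T.dist v x < T.dist u x}
  have huv₁ := dist_eq_one_iff_adj.mpr huv
  have child (x : V) (hx : x ∈ B) : ∃ w, T.Adj x w ∧ T.dist u w = T.dist u x + 1 := by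
    simp only [B, Finset.mem_filter, mem_neighborFinset] at hx
    have hxu : x ≠ u := by rintro rfl; simp at hx
    have := (hT.connected x u).degree_pos_left hxu
    exact hT.exists_adj_dist_eq_add_one u (by have := hleaf x hx.2 hx.1; omega)
  choose! c hc using child
  have hcD (x : V) (hx : x ∈ B) : c x ∈ D.erase v ∧ c x ∉ A := by
    obtain ⟨hxc, hcx⟩ := hc x hx
    simp only [B, Finset.mem_filter, mem_neighborFinset] at hx
    have : T.dist v (c x) ≤ T.dist v x + T.dist x (c x) := hT.connected.dist_triangle
    rw [dist_eq_one_iff_adj.mpr hxc] at this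
    have hcv : c x ≠ v := by rintro h; rw [h, huv₁] at hcx; omega
    simp only [D, A, Finset.mem_erase, Finset.mem_filter, Finset.mem_univ, mem_neighborFinset]
    exact ⟨⟨hcv, trivial, by omega⟩, fun h => hchild x (c x) hx.2 hx.1 hxc hcx h.1⟩
  have hinj : Set.InjOn c B := fun x₁ h₁ x₂ h₂ he =>
    hT.eq_of_adj_of_dist_eq_add_one (hc x₁ h₁).1 (he ▸ (hc x₂ h₂).1) (hc x₁ h₁).2
      (he ▸ (hc x₂ h₂).2)
  have hA : A ⊆ D.erase v := fun x hx => by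
    simp only [A, D, Finset.mem_erase, Finset.mem_filter, Finset.mem_univ,
      mem_neighborFinset] at hx ⊢
    exact ⟨hx.1.ne', trivial, hx.2⟩
  have hvD : v ∈ D := by simp [D, huv₁]
  calc #B + #A + 1 = #(A ∪ B.image c) + 1 := by
        rw [Finset.card_union_of_disjoint, Finset.card_image_of_injOn hinj, add_comm #A]
        exact Finset.disjoint_left.mpr fun x hxA hxB => by
          obtain ⟨y, hy, rfl⟩ := Finset.mem_image.mp hxB
          exact (hcD y hy).2 hxA
    _ ≤ #(D.erase v) + 1 := by
        gcongr
        exact Finset.union_subset hA (Finset.image_subset_iff.mpr fun x hx => (hcD x hx).1)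
    _ = #D := Finset.card_erase_add_one hvD

lemma card_filter_neighborFinset_add_le_of_not_hasSpanningKEndedTree (hT : T.IsTree)
    (hle : T ≤ G ⊔ edge u v) (huv : T.Adj u v) (h : ¬ HasSpanningKEndedTree G #T.leaves) :
    #{x ∈ G.neighborFinset u | T.dist v x < T.dist u x} +
      #{x ∈ G.neighborFinset v | T.dist v x < T.dist u x} + 1 ≤
      #({x | T.dist v x < T.dist u x} : Finset V) :=
  card_filter_neighborFinset_add_le hT huv
    (fun _ hy hGuy hdy => h (hasSpanningKEndedTree_card_leaves_of_adj_leaf hT hle huv hy hGuy hdy))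
    (fun _ _ hx hGux hxw hw hGvw =>
      h (hasSpanningKEndedTree_card_leaves_of_adj_child hT hle huv hx hxw hw hGux hGvw))

end SimpleGraph

theorem HasSpanningKEndedTree.mono {V : Type*} [Fintype V] {G H : SimpleGraph V} {m k : ℕ}
    (hGH : G ≤ H) (hmk : m ≤ k) (h : HasSpanningKEndedTree G m) : HasSpanningKEndedTree H k :=
  let ⟨T, hTG, hT, hTm⟩ := h
  ⟨T, hTG.trans hGH, hT, hTm.trans hmk⟩

open SimpleGraph in
theorem HasSpanningKEndedTree.of_sup_edge {V : Type*} [Fintype V] {G : SimpleGraph V} {u v : V}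
    {k : ℕ} (hdeg : Fintype.card V ≤ G.degree u + G.degree v + 1)
    (h : HasSpanningKEndedTree (G ⊔ edge u v) k) : HasSpanningKEndedTree G k := by
  obtain ⟨T, hle, hT, hk⟩ := h
  refine HasSpanningKEndedTree.mono le_rfl hk (?_ : HasSpanningKEndedTree G #T.leaves)
  by_cases huv : T.Adj u v
  · by_contra hno
    have hv := card_filter_neighborFinset_add_le_of_not_hasSpanningKEndedTree hT hle huv hno
    have hu := card_filter_neighborFinset_add_le_of_not_hasSpanningKEndedTree hT
      (edge_comm u v ▸ hle) huv.symm hno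
    have hV := hT.card_filter_dist_lt_add_card_filter_dist_lt huv univ
    have hdu := hT.card_filter_dist_lt_add_card_filter_dist_lt huv (G.neighborFinset u)
    have hdv := hT.card_filter_dist_lt_add_card_filter_dist_lt huv (G.neighborFinset v)
    rw [card_neighborFinset_eq_degree] at hdu hdv
    rw [card_univ] at hV
    omega
  · exact ⟨T, Disjoint.left_le_of_le_sup_right hle (T.disjoint_edge.mpr huv), hT, le_rfl⟩

theorem closure_step_spanning_k_ended_tree_general {n k : ℕ}
    (G : SimpleGraph (Fin n))
    (u v : Fin n)
    (hdeg : (n : ℤ) - 1 ≤ (G.degree u : ℤ) + (G.degree v : ℤ)) :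
    HasSpanningKEndedTree G k ↔
      HasSpanningKEndedTree (G ⊔ SimpleGraph.fromEdgeSet {s(u, v)}) k :=
  ⟨HasSpanningKEndedTree.mono le_sup_left le_rfl,
    HasSpanningKEndedTree.of_sup_edge (by rw [Fintype.card_fin]; omega)⟩

/-- **Theorem (Broersma–Tuinstra closure step).**  Let `G` be a connected graph
of order `n`, let `2 ≤ k ≤ n - 1`, and let `u, v` be distinct nonadjacent
vertices of `G` with `d(u) + d(v) ≥ n - 1`.  Then `G` has a spanning
`k`-ended-tree if and only if the graph `G + uv` obtained by adding the edge
`uv` has one. -/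
theorem closure_step_spanning_k_ended_tree {n k : ℕ}
    (G : SimpleGraph (Fin n)) (hG : G.Connected)
    (hk2 : 2 ≤ k) (hkn : k ≤ n - 1)
    (u v : Fin n) (hne : u ≠ v) (hadj : ¬ G.Adj u v)
    (hdeg : (n : ℤ) - 1 ≤ (G.degree u : ℤ) + (G.degree v : ℤ)) :
    HasSpanningKEndedTree G k ↔
      HasSpanningKEndedTree (G ⊔ SimpleGraph.fromEdgeSet {s(u, v)}) k :=
  closure_step_spanning_k_ended_tree_general G u v hdeg
end

section
/- Let G be a connected graph with n vertices and e(G) edges. Then the spectral radius satisfies ρ(G) ≤ √(2e(G) − n + 1). -/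
open Finset
open scoped Classical

private lemma hong_deg_sum {n : ℕ} (G : SimpleGraph (Fin n)) (hG : G.Connected)
    (i : Fin n) :
    ∑ k ∈ G.neighborFinset i, G.degree k + (n - 1) ≤ 2 * G.edgeFinset.card := by
  classical
  have hdeg : ∀ v : Fin n, v ≠ i → 1 ≤ G.degree v := by
    intro v hv
    obtain ⟨p⟩ := hG.preconnected v i
    have hadj := SimpleGraph.Walk.adj_snd (p := p)
      (SimpleGraph.Walk.not_nil_of_ne hv)
    exact (SimpleGraph.degree_pos_iff_exists_adj G v).mpr ⟨_, hadj⟩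
  have hsplit : ∑ k ∈ univ \ G.neighborFinset i, G.degree k
      + ∑ k ∈ G.neighborFinset i, G.degree k = ∑ k, G.degree k :=
    Finset.sum_sdiff (Finset.subset_univ _)
  have hi : i ∈ univ \ G.neighborFinset i := by
    simp [SimpleGraph.mem_neighborFinset]
  have h1 : ((univ \ G.neighborFinset i).erase i).card
      ≤ ∑ k ∈ (univ \ G.neighborFinset i).erase i, G.degree k := by
    calc ((univ \ G.neighborFinset i).erase i).card
        = ∑ _k ∈ (univ \ G.neighborFinset i).erase i, 1 := by simp
      _ ≤ _ := Finset.sum_le_sum (fun v hv => hdeg v (Finset.ne_of_mem_erase hv))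
  have h2 : G.degree i + ∑ k ∈ (univ \ G.neighborFinset i).erase i, G.degree k
      = ∑ k ∈ univ \ G.neighborFinset i, G.degree k :=
    Finset.add_sum_erase _ (fun v => G.degree v) hi
  have hcard : (univ \ G.neighborFinset i).card = n - G.degree i := by
    rw [Finset.card_sdiff_of_subset (Finset.subset_univ _)]
    simp [SimpleGraph.card_neighborFinset_eq_degree]
  have hcard2 : ((univ \ G.neighborFinset i).erase i).card
      = n - G.degree i - 1 := by
    rw [Finset.card_erase_of_mem hi, hcard]
  have hlt : G.degree i < n := by
    simpa using G.degree_lt_card_verts i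
  have h2e : ∑ k, G.degree k = 2 * G.edgeFinset.card :=
    G.sum_degrees_eq_twice_card_edges
  omega

private lemma hong_deg_sum_real {n : ℕ} (G : SimpleGraph (Fin n))
    (hG : G.Connected) (i : Fin n) :
    ∑ k, adjMat G i k * (G.degree k : ℝ)
      ≤ 2 * (G.edgeFinset.card : ℝ) - (n : ℝ) + 1 := by
  classical
  have hn : 1 ≤ n := Fin.pos_iff_nonempty.mpr hG.nonempty
  have hL : ∑ k, adjMat G i k * (G.degree k : ℝ)
      = ∑ k ∈ G.neighborFinset i, (G.degree k : ℝ) := by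
    rw [SimpleGraph.neighborFinset_eq_filter]
    rw [Finset.sum_filter]
    refine Finset.sum_congr rfl fun k _ => ?_
    by_cases h : G.Adj i k <;> simp [adjMat, h]
  have h := hong_deg_sum G hG i
  have h2 := (Nat.cast_le (α := ℝ)).mpr h
  push_cast [Nat.cast_sub hn] at h2
  rw [hL]; linarith


/-- **Lemma (Hong).**  For a connected graph `G` with `n` vertices and `e(G)`
edges, `ρ(G) ≤ √(2e(G) - n + 1)`. -/
theorem hong_spectral_bound {n : ℕ} (G : SimpleGraph (Fin n))
    (hG : G.Connected) :
    specRad G ≤ Real.sqrt (2 * (G.edgeFinset.card : ℝ) - (n : ℝ) + 1) := by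
  classical
  apply Real.sSup_le _ (Real.sqrt_nonneg _)
  intro μ hμ
  obtain ⟨x, hx⟩ := hμ.exists_hasEigenvector
  have hApp : (adjMat G).mulVec x = μ • x := by
    simpa [Matrix.mulVecLin_apply] using hx.apply_eq_smul
  obtain ⟨j, hj⟩ := Function.ne_iff.mp hx.right
  haveI : Nonempty (Fin n) := ⟨j⟩
  obtain ⟨i, -, hi⟩ := Finset.exists_max_image univ (fun v => |x v|) univ_nonempty
  have hxi : 0 < |x i| := lt_of_lt_of_le (abs_pos.mpr hj) (hi j (mem_univ j))
  have hA0 : ∀ a b, 0 ≤ adjMat G a b := by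
    intro a b; unfold adjMat; positivity
  have hrow : ∀ k, ∑ l, adjMat G k l = (G.degree k : ℝ) := by
    intro k
    have hd : G.degree k = (univ.filter fun l => G.Adj k l).card := by
      rw [← SimpleGraph.neighborFinset_eq_filter]; rfl
    simp [adjMat, Finset.sum_boole, hd]
  have hAx : ∀ k, |((adjMat G).mulVec x) k| ≤ (G.degree k : ℝ) * |x i| := by
    intro k
    calc |((adjMat G).mulVec x) k| = |∑ l, adjMat G k l * x l| := by
          simp [Matrix.mulVec, dotProduct]
      _ ≤ ∑ l, |adjMat G k l * x l| := Finset.abs_sum_le_sum_abs _ _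
      _ ≤ ∑ l, adjMat G k l * |x i| := by
          refine Finset.sum_le_sum fun l _ => ?_
          rw [abs_mul, abs_of_nonneg (hA0 k l)]
          exact mul_le_mul_of_nonneg_left (hi l (mem_univ l)) (hA0 k l)
      _ = (G.degree k : ℝ) * |x i| := by rw [← Finset.sum_mul, hrow]
  have hsq : μ ^ 2 * |x i| ≤ (2 * (G.edgeFinset.card : ℝ) - n + 1) * |x i| := by
    have h2 : (adjMat G).mulVec ((adjMat G).mulVec x) = (μ ^ 2) • x := by
      rw [hApp, Matrix.mulVec_smul, hApp, smul_smul]; ring_nf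
    calc μ ^ 2 * |x i| = |μ ^ 2 * x i| := by
          rw [abs_mul, abs_of_nonneg (sq_nonneg μ)]
      _ = |∑ k, adjMat G i k * ((adjMat G).mulVec x) k| := by
          have := congrFun h2 i
          simp only [Pi.smul_apply, smul_eq_mul] at this
          rw [← this]
          simp [Matrix.mulVec, dotProduct]
      _ ≤ ∑ k, |adjMat G i k * ((adjMat G).mulVec x) k| :=
          Finset.abs_sum_le_sum_abs _ _
      _ ≤ ∑ k, adjMat G i k * ((G.degree k : ℝ) * |x i|) := by
          refine Finset.sum_le_sum fun k _ => ?_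
          rw [abs_mul, abs_of_nonneg (hA0 i k)]
          exact mul_le_mul_of_nonneg_left (hAx k) (hA0 i k)
      _ = (∑ k, adjMat G i k * (G.degree k : ℝ)) * |x i| := by
          rw [Finset.sum_mul]; refine Finset.sum_congr rfl fun k _ => by ring
      _ ≤ (2 * (G.edgeFinset.card : ℝ) - n + 1) * |x i| := by
          exact mul_le_mul_of_nonneg_right (hong_deg_sum_real G hG i)
            (abs_nonneg _)
  have hμ2 : μ ^ 2 ≤ 2 * (G.edgeFinset.card : ℝ) - n + 1 :=
    le_of_mul_le_mul_right hsq hxi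
  calc μ ≤ |μ| := le_abs_self μ
    _ = Real.sqrt (μ ^ 2) := (Real.sqrt_sq_eq_abs μ).symm
    _ ≤ _ := Real.sqrt_le_sqrt hμ2
end

section
/- Let G be a graph with non-empty edge set. Then the spectral radius satisfies ρ(G) ≥ min{√(d(u)d(v)) : uv ∈ E(G)}, where d(u) denotes the degree of u in G. -/
/-! Evaluate the quadratic form of the adjacency matrix at `x v = √(d v)`: summing over
ordered adjacent pairs, `xᵀ A x = ∑ √(d u d v) ≥ m ∑ d u = m ‖x‖²`, where `m` is the minimum
over edges. For a symmetric matrix every Rayleigh quotient is at most the largest eigenvalue,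
which is attained on the sphere. -/

open Finset
open scoped Classical

open Matrix

open Module End in
theorem LinearMap.IsSymmetric.inner_le_sSup_hasEigenvalue_mul {E : Type*}
    [NormedAddCommGroup E] [InnerProductSpace ℝ E] [FiniteDimensional ℝ E]
    {T : E →ₗ[ℝ] E} (hT : T.IsSymmetric) (x : E) :
    inner ℝ (T x) x ≤ sSup {μ | HasEigenvalue T μ} * ‖x‖ ^ 2 := by
  rcases eq_or_ne x 0 with rfl | hx
  · simp
  have : Nontrivial E := ⟨⟨x, 0, hx⟩⟩
  set R : {y : E // y ≠ 0} → ℝ := fun y => RCLike.re (inner ℝ (T y) (y : E)) / ‖(y : E)‖ ^ 2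
  have hR : BddAbove (Set.range R) := by
    refine ⟨‖LinearMap.toContinuousLinearMap T‖, ?_⟩
    rintro _ ⟨y, rfl⟩
    exact (le_abs_self _).trans ((LinearMap.toContinuousLinearMap T).rayleighQuotient_le_norm y)
  have hmax : HasEigenvalue T (⨆ y, R y) := hT.hasEigenvalue_iSup_of_finiteDimensional
  calc inner ℝ (T x) x = R ⟨x, hx⟩ * ‖x‖ ^ 2 := by
        have : ‖x‖ ^ 2 ≠ 0 := by positivity
        simp [R, this]
    _ ≤ (⨆ y, R y) * ‖x‖ ^ 2 := by gcongr; exact le_ciSup hR _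
    _ ≤ sSup {μ | HasEigenvalue T μ} * ‖x‖ ^ 2 := by
        gcongr; exact le_csSup (finite_hasEigenvalue T).bddAbove hmax

theorem Matrix.setOf_hasEigenvalue_mulVecLin_eq_toEuclideanLin {n : Type*} [Fintype n] [DecidableEq n]
    (A : Matrix n n ℝ) :
    {μ | Module.End.HasEigenvalue A.mulVecLin μ} =
      {μ | Module.End.HasEigenvalue (toEuclideanLin A) μ} := by
  ext μ
  simp only [Set.mem_ofPred_eq, Module.End.hasEigenvalue_iff_mem_spectrum]
  show μ ∈ spectrum ℝ A.toLin' ↔ _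
  rw [spectrum_toLin', toEuclideanLin, spectrum_toLpLin]

theorem Matrix.IsHermitian.dotProduct_mulVec_le_sSup_hasEigenvalue_mul {n : Type*} [Fintype n]
    {A : Matrix n n ℝ} (hA : A.IsHermitian) (x : n → ℝ) :
    x ⬝ᵥ A *ᵥ x ≤ sSup {μ | Module.End.HasEigenvalue A.mulVecLin μ} * (x ⬝ᵥ x) := by
  have h := (isSymmetric_toEuclideanLin_iff.mpr hA).inner_le_sSup_hasEigenvalue_mul
    (WithLp.toLp 2 x)
  have hnorm : ‖WithLp.toLp 2 x‖ ^ 2 = x ⬝ᵥ x := by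
    rw [← real_inner_self_eq_norm_sq, EuclideanSpace.inner_toLp_toLp]
    simp
  rw [← setOf_hasEigenvalue_mulVecLin_eq_toEuclideanLin, hnorm] at h
  simpa [EuclideanSpace.inner_toLp_toLp, dotProduct_comm] using h

theorem adjMat_eq_adjMatrix {V : Type*} [Fintype V] (G : SimpleGraph V) :
    adjMat G = G.adjMatrix ℝ := by
  ext i j
  simp [adjMat, SimpleGraph.adjMatrix_apply]

theorem SimpleGraph.mul_sum_degree_le_dotProduct_sqrt_degree {V : Type*} [Fintype V]
    (G : SimpleGraph V) [DecidableRel G.Adj] {c : ℝ}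
    (hc : ∀ u v, G.Adj u v → c ≤ √((G.degree u : ℝ) * G.degree v)) :
    c * ∑ v, (G.degree v : ℝ) ≤
      (fun v => √(G.degree v : ℝ)) ⬝ᵥ G.adjMatrix ℝ *ᵥ fun v => √(G.degree v : ℝ) := by
  rw [G.dotProduct_mulVec_adjMatrix, mul_sum]
  gcongr with u
  calc c * G.degree u = ∑ v, if G.Adj u v then c else 0 := by
        rw [sum_ite, sum_const_zero, add_zero, sum_const, nsmul_eq_mul, mul_comm,
          ← G.neighborFinset_eq_filter, card_neighborFinset_eq_degree]
    _ ≤ _ := by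
        gcongr with v
        split_ifs with huv
        · rw [← Real.sqrt_mul (by positivity)]
          exact hc u v huv
        · rfl

/-- **Lemma (Li–Ning).**  For a graph `G` with non-empty edge set,
`ρ(G) ≥ min {√(d(u)d(v)) : uv ∈ E(G)}`. -/
theorem spectral_lower_bound_min_edge {V : Type*} [Fintype V]
    (G : SimpleGraph V) (hne : G.edgeSet.Nonempty) :
    sInf {x : ℝ | ∃ u v : V, G.Adj u v ∧
        x = Real.sqrt ((G.degree u : ℝ) * (G.degree v : ℝ))} ≤ specRad G := by
  obtain ⟨u, v, huv⟩ := SimpleGraph.ne_bot_iff_exists_adj.mp (G.edgeSet_nonempty.mp hne)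
  have hmin : ∀ a b, G.Adj a b → sInf {x : ℝ | ∃ u v : V, G.Adj u v ∧
      x = Real.sqrt ((G.degree u : ℝ) * (G.degree v : ℝ))} ≤ √((G.degree a : ℝ) * G.degree b) :=
    fun a b hab => csInf_le ⟨0, by rintro _ ⟨_, _, _, rfl⟩; positivity⟩ ⟨a, b, hab, rfl⟩
  set x : V → ℝ := fun w => √(G.degree w : ℝ)
  have hxx : x ⬝ᵥ x = ∑ w, (G.degree w : ℝ) :=
    sum_congr rfl fun w _ => Real.mul_self_sqrt (by positivity)
  have hdeg : 0 < ∑ w, (G.degree w : ℝ) :=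
    sum_pos' (fun w _ => by positivity)
      ⟨u, mem_univ u, Nat.cast_pos.mpr (G.degree_pos_iff_exists_adj u |>.mpr ⟨v, huv⟩)⟩
  have hA : (G.adjMatrix ℝ).IsHermitian := isHermitian_iff_isSymm.mpr G.isSymm_adjMatrix
  have hspec := hA.dotProduct_mulVec_le_sSup_hasEigenvalue_mul x
  rw [hxx, ← adjMat_eq_adjMatrix] at hspec
  exact le_of_mul_le_mul_right
    ((G.mul_sum_degree_le_dotProduct_sqrt_degree hmin).trans hspec) hdeg
end

section
/- Let k ≥ 1 and s ≥ 2 be integers and let n ≥ 2k + 12 with (k+2)s ≤ n. Then the graph G' = K_s ∨ (K_{n−(k+2)s} + (k+1)sK₁) satisfies ρ(G') < n − k − 2 and q(G') < 2(n − k − 2), where ρ denotes the spectral radius (largest eigenvalue of the adjacency matrix) and q denotes the signless Laplacian spectral radius (largest eigenvalue of D + A). -/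
open Finset
open scoped Classical

/-- The graph `K_s ∨ (K_{n-(k+2)s} + (k+1)s·K₁)` on `n` vertices: the first `s`
vertices are joined to everything, the vertices `0, …, n-(k+1)s - 1` form a
clique `K_s ∨ K_{n-(k+2)s} = K_{n-(k+1)s}`, and the last `(k+1)s` vertices are
adjacent only to the first `s` vertices. -/
def sJoinCliquePlusIso (n k s : ℕ) : SimpleGraph (Fin n) :=
  SimpleGraph.fromRel fun i j =>
    i.val < s ∨ (i.val < n - (k + 1) * s ∧ j.val < n - (k + 1) * s)


/-- termwise row bound with erase -/
lemma row_le_erase {N : ℕ} (G' : SimpleGraph (Fin N)) (f : Fin N → ℝ)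
    (hf : ∀ j, 0 ≤ f j) (i : Fin N) (p : Fin N → Prop) [DecidablePred p]
    (hp : ∀ j, G'.Adj i j → p j) (hpi : p i) (S : ℝ)
    (hS : (∑ j, if p j then f j else 0) = S) :
    (∑ j, if G'.Adj i j then f j else 0) ≤ S - f i := by
  rw [← hS]
  have h1 : (∑ j : Fin N, if j = i then f i else 0) = f i := by
    rw [Finset.sum_ite_eq' Finset.univ i (fun _ => f i)]
    simp
  have h2 : (∑ j : Fin N, if G'.Adj i j then f j else 0)
      ≤ ∑ j : Fin N, ((if p j then f j else 0) - (if j = i then f i else 0)) := by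
    apply Finset.sum_le_sum
    intro j _
    by_cases hj : j = i
    · subst hj
      simp [G'.irrefl, hpi]
    · rw [if_neg hj, sub_zero]
      by_cases hA : G'.Adj i j
      · rw [if_pos hA, if_pos (hp j hA)]
      · rw [if_neg hA]
        by_cases hpj : p j
        · rw [if_pos hpj]; exact hf j
        · rw [if_neg hpj]
  calc (∑ j : Fin N, if G'.Adj i j then f j else 0)
      ≤ ∑ j : Fin N, ((if p j then f j else 0) - (if j = i then f i else 0)) := h2
    _ = (∑ j : Fin N, if p j then f j else 0) - f i := by
        rw [Finset.sum_sub_distrib, h1]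

lemma row_le {N : ℕ} (G' : SimpleGraph (Fin N)) (f : Fin N → ℝ)
    (hf : ∀ j, 0 ≤ f j) (i : Fin N) (p : Fin N → Prop) [DecidablePred p]
    (hp : ∀ j, G'.Adj i j → p j) (S : ℝ)
    (hS : (∑ j, if p j then f j else 0) = S) :
    (∑ j, if G'.Adj i j then f j else 0) ≤ S := by
  rw [← hS]
  apply Finset.sum_le_sum
  intro j _
  by_cases hA : G'.Adj i j
  · rw [if_pos hA, if_pos (hp j hA)]
  · rw [if_neg hA]
    by_cases hpj : p j
    · rw [if_pos hpj]; exact hf j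
    · rw [if_neg hpj]

/-- weighted row sum bound on eigenvalues -/
lemma eig_le {N : ℕ} (M : Matrix (Fin N) (Fin N) ℝ) (hM : ∀ i j, 0 ≤ M i j)
    (w : Fin N → ℝ) (hw : ∀ i, 0 < w i) (B : ℝ)
    (hB : ∀ i, M.mulVec w i ≤ B * w i) {μ : ℝ}
    (hμ : Module.End.HasEigenvalue (Matrix.mulVecLin M) μ) : μ ≤ B := by
  obtain ⟨x, hx⟩ := hμ.exists_hasEigenvector
  have hx0 : x ≠ 0 := hx.2
  have hxe : ∀ i, (∑ j, M i j * x j) = μ * x i := by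
    intro i
    have h := hx.apply_eq_smul
    have h2 : M.mulVec x i = (μ • x) i := by rw [← Matrix.mulVecLin_apply, h]
    simpa [Matrix.mulVec, dotProduct] using h2
  obtain ⟨j₀, hj₀⟩ : ∃ j, x j ≠ 0 := Function.ne_iff.mp hx0
  obtain ⟨i₀, -, hmax⟩ := Finset.exists_max_image Finset.univ
    (fun i => |x i| / w i) ⟨j₀, Finset.mem_univ j₀⟩
  set c0 := |x i₀| / w i₀ with hc0
  have hc0pos : 0 < c0 := lt_of_lt_of_le
    (div_pos (abs_pos.mpr hj₀) (hw j₀)) (hmax j₀ (Finset.mem_univ j₀))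
  have hkey : ∀ j, |x j| ≤ c0 * w j := by
    intro j
    have := hmax j (Finset.mem_univ j)
    rw [div_le_iff₀ (hw j)] at this
    linarith [this]
  have hxi0 : 0 < |x i₀| := by
    have : c0 * w i₀ = |x i₀| := div_mul_cancel₀ _ (ne_of_gt (hw i₀))
    rw [← this]
    exact mul_pos hc0pos (hw i₀)
  have habs : |μ| * |x i₀| ≤ B * |x i₀| := by
    have h1 : |μ| * |x i₀| = |∑ j, M i₀ j * x j| := by
      rw [hxe i₀, abs_mul]
    have h2 : |∑ j, M i₀ j * x j| ≤ ∑ j, M i₀ j * (c0 * w j) := by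
      refine le_trans (Finset.abs_sum_le_sum_abs _ _) ?_
      apply Finset.sum_le_sum
      intro j _
      rw [abs_mul, abs_of_nonneg (hM i₀ j)]
      exact mul_le_mul_of_nonneg_left (hkey j) (hM i₀ j)
    have h3 : (∑ j, M i₀ j * (c0 * w j)) = c0 * M.mulVec w i₀ := by
      rw [Matrix.mulVec, dotProduct, Finset.mul_sum]
      apply Finset.sum_congr rfl
      intro j _
      ring
    have h4 : c0 * M.mulVec w i₀ ≤ c0 * (B * w i₀) :=
      mul_le_mul_of_nonneg_left (hB i₀) (le_of_lt hc0pos)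
    have h5 : c0 * (B * w i₀) = B * |x i₀| := by
      have hcw : c0 * w i₀ = |x i₀| := div_mul_cancel₀ _ (ne_of_gt (hw i₀))
      calc c0 * (B * w i₀) = B * (c0 * w i₀) := by ring
        _ = B * |x i₀| := by rw [hcw]
    rw [h1]
    calc |∑ j, M i₀ j * x j| ≤ ∑ j, M i₀ j * (c0 * w j) := h2
      _ = c0 * M.mulVec w i₀ := h3
      _ ≤ c0 * (B * w i₀) := h4
      _ = B * |x i₀| := h5
  have : |μ| ≤ B := le_of_mul_le_mul_right (by linarith [habs]) hxi0
  exact le_trans (le_abs_self μ) this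

/-- sum of a 4-piecewise constant function over Fin N -/
lemma sum_pw {N a b c : ℕ} (h1 : a ≤ b) (h2 : b ≤ c) (h3 : c ≤ N)
    (wa wm wb : ℝ) :
    (∑ j : Fin N, if j.val < a then wa else if j.val < b then wm
      else if j.val < c then wb else 0)
      = (a : ℝ) * wa + ((b - a : ℕ) : ℝ) * wm + ((c - b : ℕ) : ℝ) * wb := by
  rw [Fin.sum_univ_eq_sum_range (fun j => if j < a then wa else if j < b then wm
      else if j < c then wb else 0) N]
  rw [Finset.range_eq_Ico, ← Finset.sum_Ico_consecutive _ (Nat.zero_le c) h3,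
      ← Finset.sum_Ico_consecutive _ (Nat.zero_le b) h2,
      ← Finset.sum_Ico_consecutive _ (Nat.zero_le a) h1]
  have hA : (∑ j ∈ Finset.Ico 0 a, (if j < a then wa else if j < b then wm
      else if j < c then wb else 0)) = (a:ℝ) * wa := by
    rw [Finset.sum_congr rfl (fun j hj => ?_), Finset.sum_const, Nat.card_Ico,
      Nat.sub_zero, nsmul_eq_mul]
    rw [if_pos (Finset.mem_Ico.mp hj).2]
  have hB : (∑ j ∈ Finset.Ico a b, (if j < a then wa else if j < b then wm
      else if j < c then wb else 0)) = ((b - a : ℕ):ℝ) * wm := by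
    rw [Finset.sum_congr rfl (fun j hj => ?_), Finset.sum_const, Nat.card_Ico,
      nsmul_eq_mul]
    obtain ⟨hj1, hj2⟩ := Finset.mem_Ico.mp hj
    rw [if_neg (by omega), if_pos hj2]
  have hC : (∑ j ∈ Finset.Ico b c, (if j < a then wa else if j < b then wm
      else if j < c then wb else 0)) = ((c - b : ℕ):ℝ) * wb := by
    rw [Finset.sum_congr rfl (fun j hj => ?_), Finset.sum_const, Nat.card_Ico,
      nsmul_eq_mul]
    obtain ⟨hj1, hj2⟩ := Finset.mem_Ico.mp hj
    rw [if_neg (by omega), if_neg (by omega), if_pos hj2]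
  have hD : (∑ j ∈ Finset.Ico c N, (if j < a then wa else if j < b then wm
      else if j < c then wb else 0)) = 0 := by
    rw [Finset.sum_congr rfl (fun j hj => ?_), Finset.sum_const_zero]
    obtain ⟨hj1, hj2⟩ := Finset.mem_Ico.mp hj
    rw [if_neg (by omega), if_neg (by omega), if_neg (by omega)]
  rw [hA, hB, hC, hD, add_zero]


section NumLemmas
variable (n k s : ℝ)

lemma rowAS (hk : 1 ≤ k) (hs : 2 ≤ s) (hn : 2*k+12 ≤ n) (hns : (k+2)*s ≤ n)
    (wa wm wb : ℝ)
    (hwa : wa = (n-k-3)*((k+2)*(s-1))) (hwm : wm = s*(n-k-3))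
    (hwb : wb = s*((k+2)*(s-1))) :
    s*wa + (n-(k+2)*s)*wm + ((k+1)*s)*wb - wa ≤ (n-k-3)*wa := by
  subst hwa hwm hwb
  have hK : (0:ℝ) ≤ k-1 := by linarith
  have hS : (0:ℝ) ≤ s-2 := by linarith
  have hT : (0:ℝ) ≤ n-2*k-12 := by linarith
  have hc : (0:ℝ) ≤ n-(k+2)*s := by linarith
  nlinarith [hT, (mul_nonneg hT hT), hS, (mul_nonneg hS hT), (mul_nonneg (mul_nonneg hS hT) hT), (mul_nonneg hS hS), hK, (mul_nonneg hK hT), (mul_nonneg (mul_nonneg hK hT) hT), (mul_nonneg hK hS), (mul_nonneg (mul_nonneg hK hS) hT), (mul_nonneg (mul_nonneg (mul_nonneg hK hS) hT) hT), (mul_nonneg hK hK), (mul_nonneg (mul_nonneg hK hK) hT), (mul_nonneg (mul_nonneg hK hK) hS), (mul_nonneg (mul_nonneg (mul_nonneg hK hK) hS) hT), (mul_nonneg (mul_nonneg (mul_nonneg (mul_nonneg hK hK) hS) hS) hT), (mul_nonneg (mul_nonneg hK hK) hK), (mul_nonneg (mul_nonneg (mul_nonneg hK hK) hK) hS), (mul_nonneg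 hc hS), (mul_nonneg (mul_nonneg hc hS) hT), (mul_nonneg (mul_nonneg hc hS) hS), (mul_nonneg (mul_nonneg hc hK) hS), (mul_nonneg (mul_nonneg (mul_nonneg hc hK) hS) hT), (mul_nonneg (mul_nonneg (mul_nonneg hc hK) hS) hS)]

lemma rowAC (hns : (k+2)*s ≤ n) (wa wm : ℝ)
    (hwa : wa = (n-k-3)*((k+2)*(s-1))) (hwm : wm = s*(n-k-3)) :
    s*wa + (n-(k+2)*s)*wm - wm ≤ (n-k-3)*wm := by
  subst hwa hwm
  apply le_of_eq
  ring

lemma rowAI (wa wb : ℝ)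
    (hwa : wa = (n-k-3)*((k+2)*(s-1))) (hwb : wb = s*((k+2)*(s-1))) :
    s*wa ≤ (n-k-3)*wb := by
  subst hwa hwb; apply le_of_eq; ring

lemma rowQS (hk : 1 ≤ k) (hs : 2 ≤ s) (hn : 2*k+12 ≤ n) (hns : (k+2)*s ≤ n)
    (wa wm wb : ℝ)
    (hwa : wa = (2*n-2*k-5-s)*((2*k+3)*s-(2*k+4))) (hwm : wm = s*(2*n-2*k-5-s))
    (hwb : wb = s*((2*k+3)*s-(2*k+4))) :
    (n-1)*wa + (s*wa + (n-(k+2)*s)*wm + ((k+1)*s)*wb - wa) ≤ (2*n-2*k-5)*wa := by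
  subst hwa hwm hwb
  have hK : (0:ℝ) ≤ k-1 := by linarith
  have hS : (0:ℝ) ≤ s-2 := by linarith
  have hT : (0:ℝ) ≤ n-2*k-12 := by linarith
  have hc : (0:ℝ) ≤ n-(k+2)*s := by linarith
  nlinarith [hT, (mul_nonneg hT hT), (mul_nonneg hS hT), (mul_nonneg (mul_nonneg hS hT) hT), (mul_nonneg hS hS), hK, (mul_nonneg hK hT), (mul_nonneg (mul_nonneg hK hT) hT), (mul_nonneg hK hS), (mul_nonneg (mul_nonneg hK hS) hT), (mul_nonneg (mul_nonneg (mul_nonneg hK hS) hT) hT), (mul_nonneg (mul_nonneg (mul_nonneg hK hS) hS) hS), (mul_nonneg hK hK), (mul_nonneg (mul_nonneg hK hK) hT), (mul_nonneg (mul_nonneg hK hK) hS), (mul_nonneg (mul_nonneg (mul_nonneg hK hK) hS) hT), (mul_nonneg (mul_nonneg (mul_nonneg (mul_nonneg hK hK) hS) hS) hT), hc, (mul_nonneg hc hS), (mul_nonneg (mul_nonneg hc hS) hT), (mul_nonneg (mul_nonneg hc hS) hS), (mul_nonneg (mul_nonneg hc hK) hS), (mul_nonneg (mul_nonneg (mul_nonneg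 hc hK) hS) hT), (mul_nonneg (mul_nonneg (mul_nonneg hc hK) hS) hS)]

lemma rowQC (hk : 1 ≤ k) (hs : 2 ≤ s) (hn : 2*k+12 ≤ n) (hns : (k+2)*s ≤ n)
    (wa wm : ℝ)
    (hwa : wa = (2*n-2*k-5-s)*((2*k+3)*s-(2*k+4))) (hwm : wm = s*(2*n-2*k-5-s)) :
    ((n-(k+1)*s)-1)*wm + (s*wa + (n-(k+2)*s)*wm - wm) ≤ (2*n-2*k-5)*wm := by
  subst hwa hwm
  have h1 : (0:ℝ) < s := by linarith
  have h2 : (0:ℝ) < 2*n-2*k-5-s := by nlinarith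
  nlinarith [mul_pos h1 h2]

lemma rowQI (hk : 1 ≤ k) (hs : 2 ≤ s) (hn : 2*k+12 ≤ n) (hns : (k+2)*s ≤ n)
    (wa wb : ℝ)
    (hwa : wa = (2*n-2*k-5-s)*((2*k+3)*s-(2*k+4)))
    (hwb : wb = s*((2*k+3)*s-(2*k+4))) :
    s*wb + s*wa ≤ (2*n-2*k-5)*wb := by
  subst hwa hwb; apply le_of_eq; ring

end NumLemmas

set_option maxHeartbeats 1000000 in
lemma specA_bound {n k s : ℕ} (hk : 1 ≤ k) (hs : 2 ≤ s)
    (hn : 2 * k + 12 ≤ n) (hns : (k + 2) * s ≤ n) :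
    specRad (sJoinCliquePlusIso n k s) < (n : ℝ) - (k : ℝ) - 2 := by
  set G := sJoinCliquePlusIso n k s with hG
  set L := n - (k + 1) * s with hLdef
  have hmul : (k+2)*s = (k+1)*s + s := by ring
  have hk1s : (k+1)*s ≤ n := by omega
  have hsL : s ≤ L := by omega
  have hLn : L ≤ n := by omega
  have hLsub : L - s = n - (k+2)*s := by omega
  have hnL : n - L = (k+1)*s := by omega
  have hkR : (1:ℝ) ≤ (k:ℝ) := by exact_mod_cast hk
  have hsR : (2:ℝ) ≤ (s:ℝ) := by exact_mod_cast hs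
  have hnR : 2*(k:ℝ)+12 ≤ (n:ℝ) := by exact_mod_cast hn
  have hnsR : ((k:ℝ)+2)*(s:ℝ) ≤ (n:ℝ) := by exact_mod_cast hns
  have hcsub : ((L - s : ℕ):ℝ) = (n:ℝ) - ((k:ℝ)+2)*(s:ℝ) := by
    rw [hLsub, Nat.cast_sub hns]; push_cast; ring
  have hmsub : ((n - L : ℕ):ℝ) = ((k:ℝ)+1)*(s:ℝ) := by
    rw [hnL]; push_cast; ring
  have adjC : ∀ i j : Fin n, s ≤ i.val → G.Adj i j → j.val < L := by
    intro i j hsi hij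
    rw [hG, sJoinCliquePlusIso, SimpleGraph.fromRel_adj] at hij
    obtain ⟨-, h | h⟩ := hij
    · rcases h with h1 | ⟨h1, h2⟩
      · omega
      · exact h2
    · rcases h with h1 | ⟨h1, h2⟩
      · omega
      · exact h1
  have adjI : ∀ i j : Fin n, L ≤ i.val → G.Adj i j → j.val < s := by
    intro i j hLi hij
    rw [hG, sJoinCliquePlusIso, SimpleGraph.fromRel_adj] at hij
    obtain ⟨-, h | h⟩ := hij
    · rcases h with h1 | ⟨h1, h2⟩ <;> omega
    · rcases h with h1 | ⟨h1, h2⟩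
      · exact h1
      · omega
  -- weights
  have dpos : (0:ℝ) < (n:ℝ)-(k:ℝ)-3 := by linarith
  have A1pos : (0:ℝ) < ((k:ℝ)+2)*((s:ℝ)-1) := by nlinarith
  have spos : (0:ℝ) < (s:ℝ) := by linarith
  set wa := ((n:ℝ)-(k:ℝ)-3) * (((k:ℝ)+2)*((s:ℝ)-1)) with hwa
  set wm := (s:ℝ) * ((n:ℝ)-(k:ℝ)-3) with hwm
  set wb := (s:ℝ) * (((k:ℝ)+2)*((s:ℝ)-1)) with hwb
  have hwapos : 0 < wa := mul_pos dpos A1pos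
  have hwmpos : 0 < wm := mul_pos spos dpos
  have hwbpos : 0 < wb := mul_pos spos A1pos
  set w : Fin n → ℝ := fun j => if j.val < s then wa else if j.val < L then wm else wb with hw
  have hwpos : ∀ j, 0 < w j := by
    intro j
    rw [hw]
    dsimp only
    split_ifs <;> assumption
  have hwnn : ∀ j, 0 ≤ w j := fun j => le_of_lt (hwpos j)
  -- sum computations
  have hWn : (∑ j : Fin n, if j.val < n then w j else 0)
      = (s:ℝ)*wa + ((L-s:ℕ):ℝ)*wm + ((n-L:ℕ):ℝ)*wb := by
    rw [show (∑ j : Fin n, if j.val < n then w j else 0) = ∑ j : Fin n,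
        (if j.val < s then wa else if j.val < L then wm
          else if j.val < n then wb else 0) from Finset.sum_congr rfl fun j _ => by
      rw [hw]; dsimp only; split_ifs <;> first | rfl | omega | exact absurd j.isLt (by omega)]
    exact sum_pw hsL hLn (le_refl n) wa wm wb
  have hWL : (∑ j : Fin n, if j.val < L then w j else 0) = (s:ℝ)*wa + ((L-s:ℕ):ℝ)*wm := by
    rw [show (∑ j : Fin n, if j.val < L then w j else 0) = ∑ j : Fin n,
        (if j.val < s then wa else if j.val < L then wm
          else if j.val < L then (0:ℝ) else 0) from Finset.sum_congr rfl fun j _ => by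
      rw [hw]; dsimp only; split_ifs <;> first | rfl | omega]
    rw [sum_pw hsL (le_refl L) hLn wa wm 0]
    simp
  have hWs : (∑ j : Fin n, if j.val < s then w j else 0) = (s:ℝ)*wa := by
    rw [show (∑ j : Fin n, if j.val < s then w j else 0) = ∑ j : Fin n,
        (if j.val < s then wa else if j.val < s then (0:ℝ)
          else if j.val < s then (0:ℝ) else 0) from Finset.sum_congr rfl fun j _ => by
      rw [hw]; dsimp only; split_ifs <;> first | rfl | omega]
    rw [sum_pw (le_refl s) (le_refl s) (le_trans hsL hLn) wa 0 0]
    simp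
  -- mulVec as row sums
  have hmv : ∀ i, (adjMat G).mulVec w i = ∑ j, (if G.Adj i j then w j else 0) := by
    intro i
    rw [Matrix.mulVec, dotProduct]
    refine Finset.sum_congr rfl fun j _ => ?_
    rw [adjMat]
    by_cases hA : G.Adj i j
    · rw [if_pos hA, if_pos hA, one_mul]
    · rw [if_neg hA, if_neg hA, zero_mul]
  -- row bounds
  have hBA : ∀ i, (adjMat G).mulVec w i ≤ ((n:ℝ)-(k:ℝ)-3) * w i := by
    intro i
    rw [hmv i]
    by_cases hi : i.val < s
    · have hwi : w i = wa := by rw [hw]; dsimp only; rw [if_pos hi]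
      have hrow := row_le_erase G w hwnn i (fun j => j.val < n) (fun j _ => j.isLt)
        i.isLt _ hWn
      rw [hwi] at hrow ⊢
      rw [hcsub, hmsub] at hrow
      calc (∑ j, if G.Adj i j then w j else 0)
          ≤ (s:ℝ)*wa + ((n:ℝ) - ((k:ℝ)+2)*(s:ℝ))*wm + (((k:ℝ)+1)*(s:ℝ))*wb - wa := hrow
        _ ≤ ((n:ℝ)-(k:ℝ)-3) * wa :=
            rowAS (n:ℝ) (k:ℝ) (s:ℝ) hkR hsR hnR hnsR wa wm wb hwa hwm hwb
    · by_cases hi2 : i.val < L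
      · have hwi : w i = wm := by rw [hw]; dsimp only; rw [if_neg hi, if_pos hi2]
        have hrow := row_le_erase G w hwnn i (fun j => j.val < L)
          (fun j hj => adjC i j (le_of_not_gt hi) hj) hi2 _ hWL
        rw [hwi] at hrow ⊢
        rw [hcsub] at hrow
        calc (∑ j, if G.Adj i j then w j else 0)
            ≤ (s:ℝ)*wa + ((n:ℝ) - ((k:ℝ)+2)*(s:ℝ))*wm - wm := hrow
          _ ≤ ((n:ℝ)-(k:ℝ)-3) * wm := rowAC (n:ℝ) (k:ℝ) (s:ℝ) hnsR wa wm hwa hwm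
      · have hwi : w i = wb := by rw [hw]; dsimp only; rw [if_neg hi, if_neg hi2]
        have hrow := row_le G w hwnn i (fun j => j.val < s)
          (fun j hj => adjI i j (le_of_not_gt hi2) hj) _ hWs
        rw [hwi]
        calc (∑ j, if G.Adj i j then w j else 0)
            ≤ (s:ℝ)*wa := hrow
          _ ≤ ((n:ℝ)-(k:ℝ)-3) * wb := rowAI (n:ℝ) (k:ℝ) (s:ℝ) wa wb hwa hwb
  have hMnn : ∀ i j, 0 ≤ adjMat G i j := by
    intro i j
    rw [adjMat]
    split_ifs <;> norm_num
  have hsup : specRad G ≤ (n:ℝ)-(k:ℝ)-3 := by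
    apply Real.sSup_le
    · intro μ hμ
      exact eig_le (adjMat G) hMnn w hwpos _ hBA hμ
    · linarith
  linarith

set_option maxHeartbeats 1000000 in
lemma qA_bound {n k s : ℕ} (hk : 1 ≤ k) (hs : 2 ≤ s)
    (hn : 2 * k + 12 ≤ n) (hns : (k + 2) * s ≤ n) :
    qRad (sJoinCliquePlusIso n k s) < 2*((n : ℝ) - (k : ℝ) - 2) := by
  set G := sJoinCliquePlusIso n k s with hG
  set L := n - (k + 1) * s with hLdef
  have hmul : (k+2)*s = (k+1)*s + s := by ring
  have hk1s : (k+1)*s ≤ n := by omega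
  have hsL : s ≤ L := by omega
  have hLn : L ≤ n := by omega
  have hLsub : L - s = n - (k+2)*s := by omega
  have hnL : n - L = (k+1)*s := by omega
  have hkR : (1:ℝ) ≤ (k:ℝ) := by exact_mod_cast hk
  have hsR : (2:ℝ) ≤ (s:ℝ) := by exact_mod_cast hs
  have hnR : 2*(k:ℝ)+12 ≤ (n:ℝ) := by exact_mod_cast hn
  have hnsR : ((k:ℝ)+2)*(s:ℝ) ≤ (n:ℝ) := by exact_mod_cast hns
  have hLcast : (L:ℝ) = (n:ℝ) - ((k:ℝ)+1)*(s:ℝ) := by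
    rw [hLdef, Nat.cast_sub hk1s]; push_cast; ring
  have hcsub : ((L - s : ℕ):ℝ) = (n:ℝ) - ((k:ℝ)+2)*(s:ℝ) := by
    rw [hLsub, Nat.cast_sub hns]; push_cast; ring
  have hmsub : ((n - L : ℕ):ℝ) = ((k:ℝ)+1)*(s:ℝ) := by
    rw [hnL]; push_cast; ring
  have adjC : ∀ i j : Fin n, s ≤ i.val → G.Adj i j → j.val < L := by
    intro i j hsi hij
    rw [hG, sJoinCliquePlusIso, SimpleGraph.fromRel_adj] at hij
    obtain ⟨-, h | h⟩ := hij
    · rcases h with h1 | ⟨h1, h2⟩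
      · omega
      · exact h2
    · rcases h with h1 | ⟨h1, h2⟩
      · omega
      · exact h1
  have adjI : ∀ i j : Fin n, L ≤ i.val → G.Adj i j → j.val < s := by
    intro i j hLi hij
    rw [hG, sJoinCliquePlusIso, SimpleGraph.fromRel_adj] at hij
    obtain ⟨-, h | h⟩ := hij
    · rcases h with h1 | ⟨h1, h2⟩ <;> omega
    · rcases h with h1 | ⟨h1, h2⟩
      · exact h1
      · omega
  -- weights
  have spos : (0:ℝ) < (s:ℝ) := by linarith
  have hsd : (s:ℝ) ≤ (n:ℝ)-(k:ℝ)-3 := by nlinarith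
  have epos : (0:ℝ) < 2*(n:ℝ)-2*(k:ℝ)-5-(s:ℝ) := by linarith
  have A2pos : (0:ℝ) < (2*(k:ℝ)+3)*(s:ℝ)-(2*(k:ℝ)+4) := by nlinarith
  set wa := (2*(n:ℝ)-2*(k:ℝ)-5-(s:ℝ)) * ((2*(k:ℝ)+3)*(s:ℝ)-(2*(k:ℝ)+4)) with hwa
  set wm := (s:ℝ) * (2*(n:ℝ)-2*(k:ℝ)-5-(s:ℝ)) with hwm
  set wb := (s:ℝ) * ((2*(k:ℝ)+3)*(s:ℝ)-(2*(k:ℝ)+4)) with hwb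
  have hwapos : 0 < wa := mul_pos epos A2pos
  have hwmpos : 0 < wm := mul_pos spos epos
  have hwbpos : 0 < wb := mul_pos spos A2pos
  set w : Fin n → ℝ := fun j => if j.val < s then wa else if j.val < L then wm else wb with hw
  have hwpos : ∀ j, 0 < w j := by
    intro j
    rw [hw]
    dsimp only
    split_ifs <;> assumption
  have hwnn : ∀ j, 0 ≤ w j := fun j => le_of_lt (hwpos j)
  -- sum computations
  have hWn : (∑ j : Fin n, if j.val < n then w j else 0)
      = (s:ℝ)*wa + ((L-s:ℕ):ℝ)*wm + ((n-L:ℕ):ℝ)*wb := by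
    rw [show (∑ j : Fin n, if j.val < n then w j else 0) = ∑ j : Fin n,
        (if j.val < s then wa else if j.val < L then wm
          else if j.val < n then wb else 0) from Finset.sum_congr rfl fun j _ => by
      rw [hw]; dsimp only; split_ifs <;> first | rfl | omega]
    exact sum_pw hsL hLn (le_refl n) wa wm wb
  have hWL : (∑ j : Fin n, if j.val < L then w j else 0) = (s:ℝ)*wa + ((L-s:ℕ):ℝ)*wm := by
    rw [show (∑ j : Fin n, if j.val < L then w j else 0) = ∑ j : Fin n,
        (if j.val < s then wa else if j.val < L then wm
          else if j.val < L then (0:ℝ) else 0) from Finset.sum_congr rfl fun j _ => by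
      rw [hw]; dsimp only; split_ifs <;> first | rfl | omega]
    rw [sum_pw hsL (le_refl L) hLn wa wm 0]
    simp
  have hWs : (∑ j : Fin n, if j.val < s then w j else 0) = (s:ℝ)*wa := by
    rw [show (∑ j : Fin n, if j.val < s then w j else 0) = ∑ j : Fin n,
        (if j.val < s then wa else if j.val < s then (0:ℝ)
          else if j.val < s then (0:ℝ) else 0) from Finset.sum_congr rfl fun j _ => by
      rw [hw]; dsimp only; split_ifs <;> first | rfl | omega]
    rw [sum_pw (le_refl s) (le_refl s) (le_trans hsL hLn) wa 0 0]
    simp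
  -- ones sums
  have hOn : (∑ j : Fin n, if j.val < n then (1:ℝ) else 0) = (n:ℝ) := by
    rw [show (∑ j : Fin n, if j.val < n then (1:ℝ) else 0) = ∑ j : Fin n,
        (if j.val < n then (1:ℝ) else if j.val < n then (0:ℝ)
          else if j.val < n then (0:ℝ) else 0) from Finset.sum_congr rfl fun j _ => by
      split_ifs <;> rfl]
    rw [sum_pw (le_refl n) (le_refl n) (le_refl n) (1:ℝ) 0 0]
    simp
  have hOL : (∑ j : Fin n, if j.val < L then (1:ℝ) else 0) = (L:ℝ) := by
    rw [show (∑ j : Fin n, if j.val < L then (1:ℝ) else 0) = ∑ j : Fin n,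
        (if j.val < L then (1:ℝ) else if j.val < L then (0:ℝ)
          else if j.val < L then (0:ℝ) else 0) from Finset.sum_congr rfl fun j _ => by
      split_ifs <;> rfl]
    rw [sum_pw (le_refl L) (le_refl L) hLn (1:ℝ) 0 0]
    simp
  have hOs : (∑ j : Fin n, if j.val < s then (1:ℝ) else 0) = (s:ℝ) := by
    rw [show (∑ j : Fin n, if j.val < s then (1:ℝ) else 0) = ∑ j : Fin n,
        (if j.val < s then (1:ℝ) else if j.val < s then (0:ℝ)
          else if j.val < s then (0:ℝ) else 0) from Finset.sum_congr rfl fun j _ => by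
      split_ifs <;> rfl]
    rw [sum_pw (le_refl s) (le_refl s) (le_trans hsL hLn) (1:ℝ) 0 0]
    simp
  -- degree as sum
  have hdeg : ∀ i : Fin n, ((univ.filter fun u => G.Adj i u).card : ℝ)
      = ∑ j : Fin n, (if G.Adj i j then (1:ℝ) else 0) := by
    intro i
    exact Finset.natCast_card_filter _ _
  have hdegnn : ∀ i : Fin n, (0:ℝ) ≤ ((univ.filter fun u => G.Adj i u).card : ℝ) := by
    intro i; positivity
  -- qMat mulVec decomposition
  have hqmv : ∀ i, (qMat G).mulVec w i
      = ((univ.filter fun u => G.Adj i u).card : ℝ) * w i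
        + ∑ j : Fin n, (if G.Adj i j then w j else 0) := by
    intro i
    rw [Matrix.mulVec, dotProduct]
    have : ∀ j : Fin n, qMat G i j * w j
        = (if i = j then ((univ.filter fun u => G.Adj i u).card : ℝ) * w j else 0)
          + (if G.Adj i j then w j else 0) := by
      intro j
      rw [qMat]
      rw [add_mul]
      congr 1
      · split_ifs <;> simp
      · split_ifs <;> simp
    rw [Finset.sum_congr rfl fun j _ => this j, Finset.sum_add_distrib,
      Finset.sum_ite_eq Finset.univ i (fun j => ((univ.filter fun u => G.Adj i u).card : ℝ) * w j)]
    simp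
  -- row bounds
  have hBQ : ∀ i, (qMat G).mulVec w i ≤ (2*(n:ℝ)-2*(k:ℝ)-5) * w i := by
    intro i
    rw [hqmv i]
    by_cases hi : i.val < s
    · have hwi : w i = wa := by rw [hw]; dsimp only; rw [if_pos hi]
      have hrow := row_le_erase G w hwnn i (fun j => j.val < n) (fun j _ => j.isLt)
        i.isLt _ hWn
      have hdrow : ((univ.filter fun u => G.Adj i u).card : ℝ) ≤ (n:ℝ) - 1 := by
        rw [hdeg i]
        simpa using row_le_erase G (fun _ => (1:ℝ)) (fun _ => zero_le_one) i
          (fun j => j.val < n) (fun j _ => j.isLt) i.isLt _ hOn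
      rw [hcsub, hmsub] at hrow
      rw [hwi] at hrow ⊢
      have h1 : ((univ.filter fun u => G.Adj i u).card : ℝ) * wa ≤ ((n:ℝ)-1) * wa :=
        mul_le_mul_of_nonneg_right (by linarith) (le_of_lt hwapos)
      calc ((univ.filter fun u => G.Adj i u).card : ℝ) * wa
            + ∑ j : Fin n, (if G.Adj i j then w j else 0)
          ≤ ((n:ℝ)-1) * wa + ((s:ℝ)*wa + ((n:ℝ) - ((k:ℝ)+2)*(s:ℝ))*wm
              + (((k:ℝ)+1)*(s:ℝ))*wb - wa) := by
            apply add_le_add h1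
            exact hrow
        _ ≤ (2*(n:ℝ)-2*(k:ℝ)-5) * wa :=
            rowQS (n:ℝ) (k:ℝ) (s:ℝ) hkR hsR hnR hnsR wa wm wb hwa hwm hwb
    · by_cases hi2 : i.val < L
      · have hwi : w i = wm := by rw [hw]; dsimp only; rw [if_neg hi, if_pos hi2]
        have hrow := row_le_erase G w hwnn i (fun j => j.val < L)
          (fun j hj => adjC i j (le_of_not_gt hi) hj) hi2 _ hWL
        have hdrow : ((univ.filter fun u => G.Adj i u).card : ℝ) ≤ (L:ℝ) - 1 := by
          rw [hdeg i]
          simpa using row_le_erase G (fun _ => (1:ℝ)) (fun _ => zero_le_one) i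
            (fun j => j.val < L) (fun j hj => adjC i j (le_of_not_gt hi) hj) hi2 _ hOL
        rw [hcsub] at hrow
        rw [hwi] at hrow ⊢
        have h1 : ((univ.filter fun u => G.Adj i u).card : ℝ) * wm
            ≤ ((n:ℝ) - ((k:ℝ)+1)*(s:ℝ) - 1) * wm := by
          apply mul_le_mul_of_nonneg_right _ (le_of_lt hwmpos)
          rw [← hLcast]
          linarith
        calc ((univ.filter fun u => G.Adj i u).card : ℝ) * wm
              + ∑ j : Fin n, (if G.Adj i j then w j else 0)
            ≤ ((n:ℝ) - ((k:ℝ)+1)*(s:ℝ) - 1) * wm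
              + ((s:ℝ)*wa + ((n:ℝ) - ((k:ℝ)+2)*(s:ℝ))*wm - wm) := add_le_add h1 hrow
          _ ≤ (2*(n:ℝ)-2*(k:ℝ)-5) * wm :=
              rowQC (n:ℝ) (k:ℝ) (s:ℝ) hkR hsR hnR hnsR wa wm hwa hwm
      · have hwi : w i = wb := by rw [hw]; dsimp only; rw [if_neg hi, if_neg hi2]
        have hrow := row_le G w hwnn i (fun j => j.val < s)
          (fun j hj => adjI i j (le_of_not_gt hi2) hj) _ hWs
        have hdrow : ((univ.filter fun u => G.Adj i u).card : ℝ) ≤ (s:ℝ) := by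
          rw [hdeg i]
          simpa using row_le G (fun _ => (1:ℝ)) (fun _ => zero_le_one) i
            (fun j => j.val < s) (fun j hj => adjI i j (le_of_not_gt hi2) hj) _ hOs
        rw [hwi]
        have h1 : ((univ.filter fun u => G.Adj i u).card : ℝ) * wb ≤ (s:ℝ) * wb :=
          mul_le_mul_of_nonneg_right hdrow (le_of_lt hwbpos)
        calc ((univ.filter fun u => G.Adj i u).card : ℝ) * wb
              + ∑ j : Fin n, (if G.Adj i j then w j else 0)
            ≤ (s:ℝ) * wb + (s:ℝ) * wa := add_le_add h1 hrow
          _ ≤ (2*(n:ℝ)-2*(k:ℝ)-5) * wb :=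
              rowQI (n:ℝ) (k:ℝ) (s:ℝ) hkR hsR hnR hnsR wa wb hwa hwb
  have hMnn : ∀ i j, 0 ≤ qMat G i j := by
    intro i j
    rw [qMat]
    apply add_nonneg
    · split_ifs
      · positivity
      · exact le_refl 0
    · split_ifs <;> norm_num
  have hsup : qRad G ≤ 2*(n:ℝ)-2*(k:ℝ)-5 := by
    apply Real.sSup_le
    · intro μ hμ
      exact eig_le (qMat G) hMnn w hwpos _ hBQ hμ
    · linarith
  linarith

/-- **Lemma.**  Let `k ≥ 1`, `s ≥ 2`, and `n ≥ 2k + 12` with `(k+2)s ≤ n`.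
Then `G' = K_s ∨ (K_{n-(k+2)s} + (k+1)s·K₁)` satisfies `ρ(G') < n - k - 2` and
`q(G') < 2(n - k - 2)`. -/
theorem sJoin_spectral_bounds {n k s : ℕ} (hk : 1 ≤ k) (hs : 2 ≤ s)
    (hn : 2 * k + 12 ≤ n) (hns : (k + 2) * s ≤ n) :
    specRad (sJoinCliquePlusIso n k s) < (n : ℝ) - (k : ℝ) - 2 ∧
      qRad (sJoinCliquePlusIso n k s) < 2 * ((n : ℝ) - (k : ℝ) - 2) := by
  exact ⟨specA_bound hk hs hn hns, qA_bound hk hs hn hns⟩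
end
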